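/- arXiv:math/9805149 — 10 statements merged into one kernel-verified Lean document; each statement's English description precedes it below -/
import Mathlib

section
/- Let λ be an infinite cardinal and let u₁, u₂ be subsets of λ⁺. If h is a lawful bijection from u₁ onto u₂ (i.e. h is injective and h(α) + λ = α + λ in ordinal arithmetic for every α ∈ u₁), then ι(u₂) = ι(u₁). -/
open Cardinal

/-- `ι(A)`: the least ordinal `δ` divisible by `λ` (i.e. `δ = λ·ξ` for some `ξ`)
with `A ⊆ δ`. -/
noncomputable def iotaOf (lam : Cardinal) (A : Set Ordinal) : Ordinal :=
  sInf {δ : Ordinal | (∀ a ∈ A, a < δ) ∧ lam.ord ∣ δ}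

/-!
Below a multiple `δ` of `λ`, an ordinal `α` lies in `δ` exactly when its whole `λ`-block
`[λ·q, λ·q + λ)` does, i.e. when `α + λ ≤ δ`; this uses that `λ` is additively principal,
so `r + λ = λ` for `r < λ`. Hence the condition `A ⊆ δ` defining `ι(A)` depends only on the
set of values `α + λ`, `α ∈ A`, and a lawful bijection preserves that set.
-/

namespace Ordinal

theorem lt_iff_add_le_of_dvd {o δ α : Ordinal} (ho : IsPrincipal (· + ·) o) (ho₀ : o ≠ 0)
    (hδ : o ∣ δ) : α < δ ↔ α + o ≤ δ := by
  have ho_pos : 0 < o := pos_iff_ne_zero.2 ho₀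
  refine ⟨fun hαδ => ?_, fun hle => (lt_add_of_pos_right α ho_pos).trans_le hle⟩
  obtain ⟨ξ, rfl⟩ := hδ
  have hdiv : Order.succ (α / o) ≤ ξ := Order.succ_le_of_lt ((lt_mul_iff_div_lt ho₀).1 hαδ)
  have habsorb : α % o + o = o := isPrincipal_add_iff_add_left_eq_self.1 ho _ (mod_lt α ho₀)
  calc α + o = o * (α / o) + (α % o + o) := by rw [← add_assoc, div_add_mod]
    _ = o * Order.succ (α / o) := by rw [habsorb, Order.succ_eq_add_one, mul_add_one]
    _ ≤ o * ξ := mul_le_mul_right hdiv o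

end Ordinal

theorem iotaOf_eq_of_forall_add_ord {lam : Cardinal} (hlam : ℵ₀ ≤ lam) {A B : Set Ordinal}
    (hAB : ∀ a ∈ A, ∃ b ∈ B, b + lam.ord = a + lam.ord)
    (hBA : ∀ b ∈ B, ∃ a ∈ A, a + lam.ord = b + lam.ord) :
    iotaOf lam A = iotaOf lam B := by
  have hlt {δ : Ordinal} (hδ : lam.ord ∣ δ) (α : Ordinal) : α < δ ↔ α + lam.ord ≤ δ :=
    Ordinal.lt_iff_add_le_of_dvd (Ordinal.isPrincipal_add_ord hlam)
      (ord_eq_zero.not.2 (aleph0_pos.trans_le hlam).ne') hδ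
  unfold iotaOf
  congr 1
  ext δ
  refine and_congr_left fun hδ => ⟨fun hA b hb => ?_, fun hB a ha => ?_⟩
  · obtain ⟨a, ha, hab⟩ := hBA b hb
    rw [hlt hδ, ← hab, ← hlt hδ]
    exact hA a ha
  · obtain ⟨b, hb, hba⟩ := hAB a ha
    rw [hlt hδ, ← hba, ← hlt hδ]
    exact hB b hb

theorem iota_eq_of_lawful_general (lam : Cardinal) (hlam : Cardinal.aleph0 ≤ lam)
    (u₁ u₂ : Set Ordinal)
    (h : Ordinal → Ordinal)
    (hmap : ∀ α ∈ u₁, h α ∈ u₂)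
    (hsurj : ∀ β ∈ u₂, ∃ α ∈ u₁, h α = β)
    (hlawful : ∀ α ∈ u₁, h α + lam.ord = α + lam.ord) :
    iotaOf lam u₂ = iotaOf lam u₁ := by
  refine iotaOf_eq_of_forall_add_ord hlam (fun β hβ => ?_) fun α hα =>
    ⟨h α, hmap α hα, hlawful α hα⟩
  obtain ⟨α, hα, rfl⟩ := hsurj β hβ
  exact ⟨α, hα, (hlawful α hα).symm⟩

/-- If `λ` is an infinite cardinal, `u₁, u₂ ⊆ λ⁺`, and `h` is a lawful bijection from
`u₁` onto `u₂` (injective, with `h(α) + λ = α + λ` for all `α ∈ u₁`), then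
`ι(u₂) = ι(u₁)`. -/
theorem iota_eq_of_lawful (lam : Cardinal) (hlam : Cardinal.aleph0 ≤ lam)
    (u₁ u₂ : Set Ordinal)
    (hu₁ : ∀ α ∈ u₁, α < (Order.succ lam).ord)
    (hu₂ : ∀ α ∈ u₂, α < (Order.succ lam).ord)
    (h : Ordinal → Ordinal)
    (hmap : ∀ α ∈ u₁, h α ∈ u₂)
    (hinj : Set.InjOn h u₁)
    (hsurj : ∀ β ∈ u₂, ∃ α ∈ u₁, h α = β)
    (hlawful : ∀ α ∈ u₁, h α + lam.ord = α + lam.ord) :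
    iotaOf lam u₂ = iotaOf lam u₁ :=
  iota_eq_of_lawful_general lam hlam u₁ u₂ h hmap hsurj hlawful
end

section
/- Let K = (K, ≤_K) be an abstract elementary class. Then K is closed under unions of ≤_K-directed subsets: if D ⊆ K is ≤_K-directed (any two elements of D have a common ≤_K-upper bound in D), then ⋃D ∈ K, and ⋃D is the ≤_K-least upper bound of D. -/
/-!
Induction on the cardinality of `D`. A countable directed family has a cofinal
`ω`-chain, whose union Ax III provides. A directed `D` of uncountable size `λ` is the
union of a continuous increasing chain `⟨D_j : j < λ⟩` of directed subsets of size `< λ`: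
close the initial segments of a well-ordering of `D` of type `λ` under a choice of
common upper bounds. The unions `⋃ D_j`, which exist by induction, form a continuous
`≤_K`-chain, and the union of that chain given by Ax III is `⋃ D`.

Members of a directed family are determined by their carriers, so `D` can be indexed
by a set of subsets of `α`; this keeps the induction inside the universe of the
ordinals of Ax III.
-/

open FirstOrder Cardinal

universe u v w

/-- A τ-structure with universe a subset of a fixed ambient type `α`. -/
structure ConcStructure (L : FirstOrder.Language.{u, v}) (α : Type w) where
  carrier : Set α
  str : L.Structure carrier

namespace ConcStructure

variable {L : FirstOrder.Language.{u, v}} {α : Type w}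

/-- `M` is a substructure of `N`: the inclusion of carriers is an `L`-embedding. -/
def Sub (M N : ConcStructure L α) : Prop :=
  ∃ e : @FirstOrder.Language.Embedding L M.carrier N.carrier M.str N.str,
    ∀ x : M.carrier, (↑(e x) : α) = (x : α)

/-- `f : α → α` restricts to an `L`-isomorphism from `M` onto `N`. -/
def IsIsoBy (M N : ConcStructure L α) (f : α → α) : Prop :=
  ∃ e : @FirstOrder.Language.Equiv L M.carrier N.carrier M.str N.str,
    ∀ x : M.carrier, (↑(e x) : α) = f (x : α)

/-- `M` and `N` are isomorphic `L`-structures. -/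
def Iso (M N : ConcStructure L α) : Prop :=
  ∃ f : α → α, M.IsIsoBy N f

end ConcStructure

/-- `U` is the union of the family `s` of structures: its carrier is the union of the
carriers and every member of `s` is a substructure of `U`. -/
def IsUnionOf {L : FirstOrder.Language.{u, v}} {α : Type w}
    (U : ConcStructure L α) (s : Set (ConcStructure L α)) : Prop :=
  U.carrier = (⋃ M ∈ s, M.carrier) ∧ ∀ M ∈ s, M.Sub U

/-- An abstract elementary class of τ-structures with universes subsets of `α`:
a class `K` together with a binary relation `≤_K` satisfying Axioms 0–VI. -/
structure AEC (L : FirstOrder.Language.{u, v}) (α : Type w) where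
  K : Set (ConcStructure L α)
  le : ConcStructure L α → ConcStructure L α → Prop
  le_mem : ∀ {M N}, le M N → M ∈ K ∧ N ∈ K
  /-- Ax 0: `K` is closed under isomorphism. -/
  ax0_K : ∀ {M N}, M ∈ K → ConcStructure.Iso M N → N ∈ K
  /-- Ax 0: `≤_K` is preserved under isomorphisms. -/
  ax0_le : ∀ {M N M' N' : ConcStructure L α} {f : α → α},
    le M N → ConcStructure.IsIsoBy N N' f → ConcStructure.IsIsoBy M M' f → le M' N'
  /-- Ax I: `M ≤_K N` implies that `M` is a substructure of `N`. -/
  axI : ∀ {M N}, le M N → M.Sub N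
  /-- Ax II: `≤_K` is a partial order on `K`. -/
  axII_refl : ∀ {M}, M ∈ K → le M M
  axII_antisymm : ∀ {M N}, le M N → le N M → M = N
  axII_trans : ∀ {M N O}, le M N → le N O → le M O
  /-- Ax III, IV: the union of a `≤_K`-increasing continuous chain of elements of `K`
  is an element of `K` and the `≤_K`-least upper bound of the chain. -/
  axIII_IV : ∀ (δ : Ordinal.{w}) (M : Ordinal.{w} → ConcStructure L α),
    δ ≠ 0 →
    (∀ i j, i ≤ j → j < δ → le (M i) (M j)) →
    (∀ i, i < δ → Order.IsSuccLimit i → IsUnionOf (M i) {N | ∃ j < i, N = M j}) →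
    ∃ U, IsUnionOf U {N | ∃ j < δ, N = M j} ∧ U ∈ K ∧
      (∀ i, i < δ → le (M i) U) ∧
      ∀ W, (∀ i, i < δ → le (M i) W) → le U W
  /-- Ax V -/
  axV : ∀ {M₀ M₁ N}, le M₀ N → le M₁ N → M₀.Sub M₁ → le M₀ M₁
  /-- Ax VI: existence of a Löwenheim–Skolem number. -/
  axVI : ∃ κ : Cardinal.{w}, ∀ M ∈ K, ∀ A ⊆ M.carrier,
    ∃ N, N ∈ K ∧ le N M ∧ A ⊆ N.carrier ∧ #(↥N.carrier) ≤ κ * (#(↥A) + 1)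

namespace Set

variable {β : Type*} (op : β → β → β)

def binaryClosureStep (A : Set β) : Set β := A ∪ image2 op A A

def binaryClosure (A : Set β) : Set β := ⋃ n : ℕ, (binaryClosureStep op)^[n] A

variable {op}

theorem monotone_binaryClosureStep_iterate (A : Set β) :
    Monotone fun n => (binaryClosureStep op)^[n] A := fun _ _ hmn =>
  Function.monotone_iterate_of_id_le (fun _ => subset_union_left) hmn A

theorem subset_binaryClosure (A : Set β) : A ⊆ binaryClosure op A :=
  subset_iUnion (fun n => (binaryClosureStep op)^[n] A) 0

theorem op_mem_binaryClosure {A : Set β} {a b : β} (ha : a ∈ binaryClosure op A)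
    (hb : b ∈ binaryClosure op A) : op a b ∈ binaryClosure op A := by
  obtain ⟨m, ha⟩ := mem_iUnion.mp ha
  obtain ⟨n, hb⟩ := mem_iUnion.mp hb
  refine mem_iUnion.mpr ⟨max m n + 1, ?_⟩
  rw [Function.iterate_succ_apply']
  exact subset_union_right <| mem_image2_of_mem
    (monotone_binaryClosureStep_iterate A (le_max_left m n) ha)
    (monotone_binaryClosureStep_iterate A (le_max_right m n) hb)

theorem binaryClosure_subset {A T : Set β} (hAT : A ⊆ T) (hT : ∀ a ∈ T, ∀ b ∈ T, op a b ∈ T) :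
    binaryClosure op A ⊆ T := by
  refine iUnion_subset fun n => ?_
  induction n with
  | zero => exact hAT
  | succ n ih =>
    rw [Function.iterate_succ_apply']
    exact union_subset ih (image2_subset_iff.mpr fun a ha b hb => hT a (ih ha) b (ih hb))

theorem binaryClosure_mono {A B : Set β} (h : A ⊆ B) : binaryClosure op A ⊆ binaryClosure op B :=
  binaryClosure_subset (h.trans (subset_binaryClosure B)) fun _ ha _ hb =>
    op_mem_binaryClosure ha hb

open Cardinal in
theorem mk_binaryClosure_le (A : Set β) :
    #(binaryClosure op A) ≤ #A + ℵ₀ := by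
  set κ := #A + ℵ₀
  have hκ : ℵ₀ ≤ κ := le_add_self
  have hiter (n : ℕ) : #((binaryClosureStep op)^[n] A) ≤ κ := by
    induction n with
    | zero => exact le_self_add
    | succ n ih =>
      rw [Function.iterate_succ_apply']
      calc _ ≤ #((binaryClosureStep op)^[n] A) + #(image2 op _ _) := mk_union_le _ _
        _ ≤ κ + κ * κ := add_le_add ih (mk_image2_le.trans (mul_le_mul' ih ih))
        _ = κ := by rw [mul_eq_self hκ, add_eq_self hκ]
  have := mk_iUnion_le_lift fun n => (binaryClosureStep op)^[n] A
  simp only [lift_uzero, mk_nat, lift_aleph0] at this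
  calc _ ≤ ℵ₀ * ⨆ n, #((binaryClosureStep op)^[n] A) := this
    _ ≤ κ * κ := mul_le_mul' hκ (ciSup_le' hiter)
    _ = κ := mul_eq_self hκ

end Set

open Cardinal Ordinal Set in
theorem Ordinal.mk_setOf_typein_lt_le {β : Type w} (r : β → β → Prop) [IsWellOrder β r]
    (o : Ordinal.{w}) : #{x | typein r x < o} ≤ o.card := by
  rw [← Cardinal.lift_le.{w + 1}, ← Cardinal.mk_Iio_ordinal,
    ← Cardinal.lift_id'.{w, w + 1} #(Iio o)]
  refine lift_mk_le_lift_mk_of_injective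
    (f := fun x : {x | typein r x < o} => (⟨typein r x.1, x.2⟩ : Iio o)) fun x y h => ?_
  exact Subtype.ext (typein_injective r (congrArg Subtype.val h))

theorem DirectedOn.exists_bound_fun {β : Type*} {r : β → β → Prop} {S : Set β}
    (hS : DirectedOn r S) :
    ∃ g : β → β → β, ∀ x ∈ S, ∀ y ∈ S, g x y ∈ S ∧ r x (g x y) ∧ r y (g x y) := by
  have (x y : β) : ∃ z, x ∈ S → y ∈ S → z ∈ S ∧ r x z ∧ r y z := by
    by_cases h : x ∈ S ∧ y ∈ S
    · obtain ⟨z, hz⟩ := hS x h.1 y h.2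
      exact ⟨z, fun _ _ => hz⟩
    · exact ⟨x, fun hx hy => absurd ⟨hx, hy⟩ h⟩
  choose g hg using this
  exact ⟨g, fun x hx y hy => hg x y hx hy⟩

namespace Set

variable {β : Type w} (op : β → β → β) {S : Set β} (r : S → S → Prop) [IsWellOrder S r] (b : β)

open Ordinal in
/-- The point `b` keeps every stage nonempty, stage `0` included. -/
def closureFiltration (j : Ordinal.{w}) : Set β :=
  binaryClosure op (insert b (Subtype.val '' {x | typein r x < j}))

variable {op r b}

theorem closureFiltration_mono : Monotone (closureFiltration op r b) := fun _ _ hij =>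
  binaryClosure_mono <| insert_subset_insert <|
    image_mono fun x (hx : Ordinal.typein r x < _) => hx.trans_le hij

theorem mem_closureFiltration_base (j : Ordinal.{w}) : b ∈ closureFiltration op r b j :=
  subset_binaryClosure _ (mem_insert b _)

theorem op_mem_closureFiltration {j : Ordinal.{w}} {x y : β} (hx : x ∈ closureFiltration op r b j)
    (hy : y ∈ closureFiltration op r b j) : op x y ∈ closureFiltration op r b j :=
  op_mem_binaryClosure hx hy

open Ordinal in
theorem mem_closureFiltration_succ (x : S) :
    ↑x ∈ closureFiltration op r b (Order.succ (typein r x)) :=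
  subset_binaryClosure _ <| mem_insert_of_mem _ ⟨x, (Order.lt_succ (typein r x) :), rfl⟩

theorem closureFiltration_subset (hS : ∀ x ∈ S, ∀ y ∈ S, op x y ∈ S) (hb : b ∈ S)
    (j : Ordinal.{w}) : closureFiltration op r b j ⊆ S :=
  binaryClosure_subset (insert_subset hb (image_subset_iff.mpr fun x _ => x.2)) hS

open Cardinal in
theorem mk_closureFiltration_le (j : Ordinal.{w}) :
    #(closureFiltration op r b j) ≤ j.card + ℵ₀ :=
  calc _ ≤ #(insert b (Subtype.val '' {x | Ordinal.typein r x < j}) : Set β) + ℵ₀ :=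
        mk_binaryClosure_le _
    _ ≤ j.card + 1 + ℵ₀ := by
      gcongr
      exact mk_insert_le.trans <|
        add_le_add_left (mk_image_le.trans (Ordinal.mk_setOf_typein_lt_le r j)) 1
    _ = j.card + ℵ₀ := by rw [add_assoc, ← Nat.cast_one, nat_add_aleph0]

theorem closureFiltration_of_isSuccLimit {i : Ordinal.{w}} (hi : Order.IsSuccLimit i) :
    closureFiltration op r b i = ⋃ j ∈ Iio i, closureFiltration op r b j := by
  refine (binaryClosure_subset (insert_subset ?_ ?_) ?_).antisymm
    (iUnion₂_subset fun j hj => closureFiltration_mono hj.le)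
  · exact mem_biUnion hi.bot_lt (mem_closureFiltration_base ⊥)
  · rintro _ ⟨x, hx, rfl⟩
    exact mem_biUnion (hi.succ_lt hx) (mem_closureFiltration_succ x)
  · intro x hx y hy
    obtain ⟨j, hj, hx⟩ := mem_iUnion₂.mp hx
    obtain ⟨k, hk, hy⟩ := mem_iUnion₂.mp hy
    exact mem_biUnion (show max j k ∈ Iio i from max_lt (mem_Iio.mp hj) (mem_Iio.mp hk)) <|
      op_mem_closureFiltration (closureFiltration_mono (le_max_left j k) hx)
        (closureFiltration_mono (le_max_right j k) hy)

open Ordinal in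
theorem iUnion_closureFiltration (hr : Order.IsSuccLimit (type r))
    (hS : ∀ x ∈ S, ∀ y ∈ S, op x y ∈ S) (hb : b ∈ S) :
    ⋃ j ∈ Iio (type r), closureFiltration op r b j = S :=
  (iUnion₂_subset fun j _ => closureFiltration_subset hS hb j).antisymm fun x hx =>
    mem_biUnion (hr.succ_lt (typein_lt_type r ⟨x, hx⟩)) (mem_closureFiltration_succ ⟨x, hx⟩)

end Set

namespace ConcStructure

variable {L : FirstOrder.Language.{u, v}} {α : Type w}

open FirstOrder.Language

theorem Sub.carrier_subset {M N : ConcStructure L α} (h : M.Sub N) : M.carrier ⊆ N.carrier := by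
  obtain ⟨e, he⟩ := h
  exact fun a ha => by simpa only [he] using (e ⟨a, ha⟩).2

theorem eq_of_sub_of_sub {M N W : ConcStructure L α} (hM : M.Sub W) (hN : N.Sub W)
    (h : M.carrier = N.carrier) : M = N := by
  obtain ⟨c, sM⟩ := M
  obtain ⟨c', sN⟩ := N
  obtain rfl : c = c' := h
  obtain ⟨eM, heM⟩ := hM
  obtain ⟨eN, heN⟩ := hN
  have he : ⇑eM = ⇑eN := funext fun x => Subtype.ext (by rw [heM x, heN x])
  congr 1
  apply Structure.ext
  · funext n f x
    apply Subtype.ext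
    have hfM := congrArg Subtype.val (@Embedding.map_fun L c W.carrier sM W.str eM n f x)
    have hfN := congrArg Subtype.val (@Embedding.map_fun L c W.carrier sN W.str eN n f x)
    rw [heM] at hfM
    rw [heN] at hfN
    rw [hfM, hfN, he]
  · funext n R x
    have hRM := @Embedding.map_rel L c W.carrier sM W.str eM n R x
    have hRN := @Embedding.map_rel L c W.carrier sN W.str eN n R x
    rw [he] at hRM
    exact propext (hRM.symm.trans hRN)

theorem biUnion_image_carrier {κ : Type*} {s : Set κ} {D : κ → Set (ConcStructure L α)}
    {V : κ → ConcStructure L α} (hV : ∀ j ∈ s, IsUnionOf (V j) (D j)) :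
    ⋃ N ∈ V '' s, N.carrier = ⋃ M ∈ ⋃ j ∈ s, D j, M.carrier := by
  rw [Set.biUnion_image]
  simp only [Set.biUnion_iUnion]
  exact Set.iUnion₂_congr fun j hj => (hV j hj).1

end ConcStructure

namespace AEC

open Set Cardinal Ordinal

variable {L : FirstOrder.Language.{u, v}} {α : Type w}

def IsUnionLUB (C : AEC L α) (D : Set (ConcStructure L α)) (U : ConcStructure L α) : Prop :=
  IsUnionOf U D ∧ U ∈ C.K ∧ (∀ M ∈ D, C.le M U) ∧ ∀ W, (∀ M ∈ D, C.le M W) → C.le U W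

variable {C : AEC L α}

theorem injOn_carrier_of_directedOn {D : Set (ConcStructure L α)} (hD : DirectedOn C.le D) :
    InjOn ConcStructure.carrier D := fun M hM N hN h =>
  let ⟨_, _, hMW, hNW⟩ := hD M hM N hN
  ConcStructure.eq_of_sub_of_sub (C.axI hMW) (C.axI hNW) h

theorem isUnionLUB_of_le {D : Set (ConcStructure L α)} {U : ConcStructure L α}
    (hcar : U.carrier = ⋃ M ∈ D, M.carrier) (hK : U ∈ C.K) (hle : ∀ M ∈ D, C.le M U)
    (hlub : ∀ W, (∀ M ∈ D, C.le M W) → C.le U W) : C.IsUnionLUB D U :=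
  ⟨⟨hcar, fun M hM => C.axI (hle M hM)⟩, hK, hle, hlub⟩

theorem IsUnionLUB.of_cofinal {D D' : Set (ConcStructure L α)} {U : ConcStructure L α}
    (hU : C.IsUnionLUB D' U) (hsub : D' ⊆ D) (hcof : ∀ M ∈ D, ∃ M' ∈ D', C.le M M') :
    C.IsUnionLUB D U := by
  obtain ⟨⟨hcar, -⟩, hK, hle, hlub⟩ := hU
  have hleD : ∀ M ∈ D, C.le M U := fun M hM =>
    let ⟨M', hM', hMM'⟩ := hcof M hM
    C.axII_trans hMM' (hle M' hM')
  refine isUnionLUB_of_le (subset_antisymm ?_ ?_) hK hleD fun W hW =>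
    hlub W fun M hM => hW M (hsub hM)
  · exact hcar ▸ biUnion_subset_biUnion_left hsub
  · exact iUnion₂_subset fun M hM => (C.axI (hleD M hM)).carrier_subset

theorem IsUnionLUB.biUnion {κ : Type*} {s : Set κ} {D : κ → Set (ConcStructure L α)}
    {V : κ → ConcStructure L α} {U : ConcStructure L α} (hV : ∀ j ∈ s, C.IsUnionLUB (D j) (V j))
    (hU : C.IsUnionLUB (V '' s) U) : C.IsUnionLUB (⋃ j ∈ s, D j) U := by
  obtain ⟨⟨hcar, -⟩, hK, hle, hlub⟩ := hU
  refine isUnionLUB_of_le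
    (hcar.trans (ConcStructure.biUnion_image_carrier fun j hj => (hV j hj).1)) hK ?_
    fun W hW => hlub W <| forall_mem_image.mpr fun j hj =>
      (hV j hj).2.2.2 W fun M hM => hW M (mem_biUnion hj hM)
  intro M hM
  obtain ⟨j, hj, hM⟩ := mem_iUnion₂.mp hM
  exact C.axII_trans ((hV j hj).2.2.1 M hM) (hle _ (mem_image_of_mem V hj))

theorem isUnionOf_image_of_biUnion {κ : Type*} {s : Set κ} {D : κ → Set (ConcStructure L α)}
    {V : κ → ConcStructure L α} {W : ConcStructure L α} (hV : ∀ j ∈ s, IsUnionOf (V j) (D j))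
    (hW : IsUnionOf W (⋃ j ∈ s, D j)) (hsub : ∀ j ∈ s, (V j).Sub W) : IsUnionOf W (V '' s) :=
  ⟨hW.1.trans (ConcStructure.biUnion_image_carrier hV).symm, forall_mem_image.mpr hsub⟩

theorem exists_isUnionLUB_of_chain (δ : Ordinal.{w}) (M : Ordinal.{w} → ConcStructure L α)
    (hδ : δ ≠ 0) (hmono : ∀ i j, i ≤ j → j < δ → C.le (M i) (M j))
    (hcont : ∀ i < δ, Order.IsSuccLimit i → IsUnionOf (M i) (M '' Iio i)) :
    ∃ U, C.IsUnionLUB (M '' Iio δ) U := by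
  have himage (i : Ordinal.{w}) : {N | ∃ j < i, N = M j} = M '' Iio i := by
    ext N
    simp [eq_comm]
  obtain ⟨U, hU, hK, hle, hlub⟩ :=
    C.axIII_IV δ M hδ hmono fun i hi hlim => himage i ▸ hcont i hi hlim
  exact ⟨U, himage δ ▸ hU, hK, forall_mem_image.mpr hle,
    fun W hW => hlub W (forall_mem_image.mp hW)⟩

theorem exists_isUnionLUB_range_of_le_succ (W : ℕ → ConcStructure L α)
    (hW : ∀ n, C.le (W n) (W (n + 1))) : ∃ U, C.IsUnionLUB (range W) U := by
  have hmono {m n : ℕ} (h : m ≤ n) : C.le (W m) (W n) := by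
    induction n, h using Nat.le_induction with
    | base => exact C.axII_refl (C.le_mem (hW m)).1
    | succ n _ ih => exact C.axII_trans ih (hW n)
  set M : Ordinal.{w} → ConcStructure L α := fun i => W i.card.toNat
  have hM (n : ℕ) : M n = W n := by simp [M]
  have hrange : M '' Iio ω = range W := by
    ext N
    simp [lt_omega0, hM]
  have hchain (i j : Ordinal.{w}) (hij : i ≤ j) (hj : j < ω) : C.le (M i) (M j) := by
    obtain ⟨n, rfl⟩ := lt_omega0.mp hj
    obtain ⟨m, rfl⟩ := lt_omega0.mp (hij.trans_lt hj)
    rw [hM, hM]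
    exact hmono (by exact_mod_cast hij)
  obtain ⟨U, hU⟩ := C.exists_isUnionLUB_of_chain ω M omega0_ne_zero hchain
    fun i hi hlim => absurd (omega0_le_of_isSuccLimit hlim) hi.not_ge
  exact ⟨U, hrange ▸ hU⟩

theorem exists_isUnionLUB_range_of_countable {ι : Type*} [Countable ι] [Nonempty ι]
    {f : ι → ConcStructure L α} (hf : Directed C.le f) : ∃ U, C.IsUnionLUB (range f) U := by
  have := Encodable.ofCountable ι
  inhabit ι
  obtain ⟨U, hU⟩ := C.exists_isUnionLUB_range_of_le_succ _ hf.sequence_mono_nat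
  refine ⟨U, hU.of_cofinal (range_comp_subset_range _ f) ?_⟩
  rintro _ ⟨i, rfl⟩
  exact ⟨_, mem_range_self _, hf.rel_sequence i⟩

theorem exists_isUnionLUB_image_of_aleph0_lt {ι : Type w} (f : ι → ConcStructure L α)
    {S : Set ι} (hne : S.Nonempty) (hdir : DirectedOn (f ⁻¹'o C.le) S) (hS : ℵ₀ < #S)
    (ih : ∀ T : Set ι, T.Nonempty → DirectedOn (f ⁻¹'o C.le) T → #T < #S →
      ∃ U, C.IsUnionLUB (f '' T) U) :
    ∃ U, C.IsUnionLUB (f '' S) U := by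
  obtain ⟨i₀, hi₀⟩ := hne
  obtain ⟨ub, hub⟩ := hdir.exists_bound_fun
  have hSub : ∀ x ∈ S, ∀ y ∈ S, ub x y ∈ S := fun x hx y hy => (hub x hx y hy).1
  obtain ⟨r, _, hr⟩ := exists_ord_eq S
  set E := closureFiltration ub r i₀
  have hES : ∀ j, E j ⊆ S := closureFiltration_subset hSub hi₀
  have hEdir (j : Ordinal.{w}) : DirectedOn (f ⁻¹'o C.le) (E j) := fun x hx y hy =>
    ⟨ub x y, op_mem_closureFiltration hx hy, (hub x (hES j hx) y (hES j hy)).2⟩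
  have hEsmall {j : Ordinal.{w}} (hj : j < type r) : #(E j) < #S :=
    (mk_closureFiltration_le j).trans_lt <| add_lt_of_lt hS.le (lt_ord.mp (hr ▸ hj)) hS
  have hV (j : Ordinal.{w}) : ∃ V, j < type r → C.IsUnionLUB (f '' E j) V := by
    by_cases hj : j < type r
    · obtain ⟨V, hV⟩ := ih (E j) ⟨i₀, mem_closureFiltration_base j⟩ (hEdir j) (hEsmall hj)
      exact ⟨V, fun _ => hV⟩
    · exact ⟨f i₀, fun h => absurd h hj⟩
  choose V hV using hV
  have hchain (i j : Ordinal.{w}) (hij : i ≤ j) (hj : j < type r) : C.le (V i) (V j) :=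
    (hV i (hij.trans_lt hj)).2.2.2 _ fun M hM =>
      (hV j hj).2.2.1 M (image_mono (closureFiltration_mono hij) hM)
  have hcont (i : Ordinal.{w}) (hi : i < type r) (hlim : Order.IsSuccLimit i) :
      IsUnionOf (V i) (V '' Iio i) := by
    refine isUnionOf_image_of_biUnion (D := fun j => f '' E j)
      (fun j hj => (hV j (lt_trans hj hi)).1) ?_ fun j hj => C.axI (hchain j i (le_of_lt hj) hi)
    rw [← image_iUnion₂, ← closureFiltration_of_isSuccLimit hlim]
    exact (hV i hi).1
  have hlim : Order.IsSuccLimit (type r) := hr ▸ isSuccLimit_ord hS.le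
  obtain ⟨U, hU⟩ := C.exists_isUnionLUB_of_chain (type r) V hlim.ne_bot hchain hcont
  have hUS := hU.biUnion (s := Iio (type r)) (D := fun j => f '' E j) fun j hj => hV j hj
  rw [← image_iUnion₂, iUnion_closureFiltration hlim hSub hi₀] at hUS
  exact ⟨U, hUS⟩

theorem exists_isUnionLUB_image {ι : Type w} (f : ι → ConcStructure L α) {S : Set ι}
    (hne : S.Nonempty) (hdir : DirectedOn (f ⁻¹'o C.le) S) : ∃ U, C.IsUnionLUB (f '' S) U := by
  induction hc : #S using WellFoundedLT.induction generalizing S with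
  | ind c ih =>
    rcases le_or_gt #S ℵ₀ with hS | hS
    · have : Countable S := mk_le_aleph0_iff.mp hS
      have : Nonempty S := hne.to_subtype
      rw [image_eq_range]
      exact C.exists_isUnionLUB_range_of_countable (directedOn_iff_directed.mp hdir)
    · exact exists_isUnionLUB_image_of_aleph0_lt f hne hdir hS fun T hT hTdir hTS =>
        ih _ (hc ▸ hTS) hT hTdir rfl

end AEC

theorem AEC.union_of_directed_general {L : FirstOrder.Language.{u, v}} {α : Type w}
    (C : AEC L α) (D : Set (ConcStructure L α))
    (hne : D.Nonempty)
    (hdir : ∀ M ∈ D, ∀ N ∈ D, ∃ W ∈ D, C.le M W ∧ C.le N W) :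
    ∃ U, IsUnionOf U D ∧ U ∈ C.K ∧ (∀ M ∈ D, C.le M U) ∧
      ∀ W, (∀ M ∈ D, C.le M W) → C.le U W := by
  have : Nonempty (ConcStructure L α) := ⟨hne.some⟩
  set f := Function.invFunOn ConcStructure.carrier D
  have hfD : f '' (ConcStructure.carrier '' D) = D :=
    (injOn_carrier_of_directedOn hdir).leftInvOn_invFunOn.image_image
  obtain ⟨U, hU⟩ :=
    C.exists_isUnionLUB_image f (hne.image _) (directedOn_image.mp (hfD.symm ▸ hdir))
  exact ⟨U, hfD ▸ hU⟩

/-- An abstract elementary class is closed under unions of `≤_K`-directed subsets: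
the union of a (nonempty) `≤_K`-directed subset `D ⊆ K` is an element of `K` and is
the `≤_K`-least upper bound of `D`. -/
theorem AEC.union_of_directed {L : FirstOrder.Language.{u, v}} {α : Type w}
    (C : AEC L α) (D : Set (ConcStructure L α)) (hDK : D ⊆ C.K)
    (hne : D.Nonempty)
    (hdir : ∀ M ∈ D, ∀ N ∈ D, ∃ W ∈ D, C.le M W ∧ C.le N W) :
    ∃ U, IsUnionOf U D ∧ U ∈ C.K ∧ (∀ M ∈ D, C.le M U) ∧
      ∀ W, (∀ M ∈ D, C.le M W) → C.le U W :=
  AEC.union_of_directed_general C D hne hdir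
end

section
/- Suppose λ > ℵ₀ is a cardinal with λ^{<λ} = λ and ε < λ is a limit ordinal. If a forcing notion P satisfies *^ε_λ, then P satisfies the λ⁺-chain condition: for every sequence ⟨p_i : i < λ⁺⟩ of elements of P there exist i < j < λ⁺ such that p_i and p_j are compatible (have a common upper bound in P); equivalently, every antichain of P has cardinality at most λ. -/
open Cardinal

/-- `C` is a club (closed unbounded set) in the ordinal `κ`. -/
def IsClubIn (κ : Ordinal) (C : Set Ordinal) : Prop :=
  C ⊆ Set.Iio κ ∧ (∀ a < κ, ∃ b ∈ C, a < b) ∧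
    ∀ δ, δ < κ → δ ≠ 0 → (∀ a < δ, ∃ b ∈ C, a < b ∧ b < δ) → δ ∈ C

/-- The forcing notion `P` (a partial order with minimum `bot`) satisfies `*^ε_λ`:
player I has a winning strategy in the game of length `ε` in which, at move `ζ`,
player I chooses a sequence `⟨q_i^ζ : i < λ⁺⟩` of conditions dominating all earlier
moves of II together with a function `f_ζ : λ⁺ → λ⁺` regressive on `C_ζ ∩ S^{λ⁺}_λ`
for some club `C_ζ` (with `q_i^0 = ∅_P` and `f_0 ≡ 0`), and player II replies with
`⟨p_i^ζ : i < λ⁺⟩`, `p_i^ζ ≥ q_i^ζ`; player I wins if on a club `E`, for all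
`i < j` in `E ∩ S^{λ⁺}_λ` with `f_ζ(i) = f_ζ(j)` for all `ζ < ε`, the conditions
`{p_i^ζ, p_j^ζ : ζ < ε}` have a common upper bound.  A strategy is a pair of
functions producing I's moves from II's earlier moves. -/
def SatisfiesStar (lam : Cardinal) (ε : Ordinal) (P : Type*) [PartialOrder P]
    (bot : P) : Prop :=
  ∃ (σq : Ordinal → (Ordinal → Ordinal → P) → Ordinal → P)
    (σf : Ordinal → (Ordinal → Ordinal → P) → Ordinal → Ordinal),
    -- the strategy depends only on the earlier moves of II
    (∀ ζ, ∀ p p' : Ordinal → Ordinal → P, (∀ ξ < ζ, p ξ = p' ξ) →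
      σq ζ p = σq ζ p' ∧ σf ζ p = σf ζ p') ∧
    -- the first move of I
    (∀ p, σq 0 p = fun _ => bot) ∧ (∀ p, σf 0 p = fun _ => 0) ∧
    -- for every play `p` of II against the strategy in which II moves legally:
    ∀ p : Ordinal → Ordinal → P,
      (∀ ζ < ε, ∀ i < (Order.succ lam).ord, σq ζ p i ≤ p ζ i) →
      -- the moves of I are legal: they dominate the earlier moves of II,
      (∀ ζ < ε, ∀ ξ < ζ, ∀ i < (Order.succ lam).ord, p ξ i ≤ σq ζ p i) ∧
      -- and the `f_ζ` are regressive on `C_ζ ∩ S^{λ⁺}_λ` for some club `C_ζ`;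
      (∀ ζ < ε, ∃ C, IsClubIn (Order.succ lam).ord C ∧
        ∀ β ∈ C, β.cof = lam → σf ζ p β < β) ∧
      -- and player I wins the play:
      ∃ E, IsClubIn (Order.succ lam).ord E ∧
        ∀ i ∈ E, ∀ j ∈ E, Ordinal.cof i = lam → Ordinal.cof j = lam → i < j →
          (∀ ζ < ε, σf ζ p i = σf ζ p j) →
          ∃ r : P, (∀ ζ < ε, p ζ i ≤ r) ∧ ∀ ζ < ε, p ζ j ≤ r
/-!
Player II opens with the given sequence `p` and afterwards copies every move of player I. The
winning strategy of player I then provides a club `E` and fewer than `λ` functions `f_ζ`, each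
regressive on `S^{λ⁺}_λ` modulo a club. Their supremum is regressive on `S^{λ⁺}_λ ∩ D` for the
club `D = E ∩ ⋂ C_ζ`, so by the pressing-down argument it is bounded by a single `a < λ⁺` on an
unbounded set of points. There the vectors `⟨f_ζ(i) : ζ < ε⟩` take at most `λ^{|ε|} ≤ λ^{<λ} = λ`
values, hence two points `i < j` share their vector, and the upper bound that player I's win
provides for the two plays lies above `p_i` and `p_j`.
-/

open Ordinal Set Order

universe u v

theorem Ordinal.iSup_Iio_lt_of_card_lt_cof {s κ : Ordinal.{u}} {f : Iio s → Ordinal.{u}}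
    (hs : s.card < κ.cof) (hf : ∀ b, f b < κ) : ⨆ b, f b < κ := by
  refine lift_iSup_lt_of_lt_cof ?_ hf
  rwa [Cardinal.mk_Iio_ordinal, ← lift_cof, Cardinal.lift_lift, Cardinal.lift_lt]

def IsClosurePoint {ι : Type*} (R : ι → Ordinal.{u} → Ordinal.{u} → Prop) (δ : Ordinal.{u}) :
    Prop :=
  ∀ i, ∀ b < δ, ∃ x < δ, R i b x

theorem exists_isClosurePoint_gt {c : Cardinal.{u}} (hc : c.IsRegular) (hc₀ : ℵ₀ < c)
    {ι : Type u} (hι : #ι < c) {R : ι → Ordinal.{u} → Ordinal.{u} → Prop}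
    (hR : ∀ i, ∀ b < c.ord, ∃ x < c.ord, R i b x) {a : Ordinal.{u}} (ha : a < c.ord) :
    ∃ δ < c.ord, a < δ ∧ IsClosurePoint R δ := by
  have hlim : IsSuccLimit c.ord := isSuccLimit_ord hc.aleph0_le
  choose! g hg using hR
  -- `H s` exceeds every witness `g i b` with `b < s`, so `nfp H` is closed under all of them.
  set H : Ordinal.{u} → Ordinal.{u} := fun s => ⨆ i, ⨆ b : Iio s, g i b + 1
  have hH : ∀ s < c.ord, H s < c.ord := fun s hs =>
    iSup_lt_of_lt_cof (by rwa [hc.cof_ord]) fun i =>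
      iSup_Iio_lt_of_card_lt_cof (by rwa [hc.cof_ord, ← lt_ord])
        fun b => hlim.add_one_lt (hg i b (b.2.trans hs)).1
  have hgH : ∀ i s, ∀ b < s, g i b < H s := fun i s b hb =>
    (Ordinal.lt_iSup_add_one (fun b : Iio s => g i b) ⟨b, hb⟩).trans_le
      (Ordinal.le_iSup (fun i => ⨆ b : Iio s, g i b + 1) i)
  have hδ : nfp H (a + 1) < c.ord :=
    nfp_lt_ord (by rwa [hc.cof_ord]) hH (hlim.add_one_lt ha)
  refine ⟨nfp H (a + 1), hδ, (lt_add_one a).trans_le (le_nfp _ _), fun i b hb => ?_⟩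
  obtain ⟨n, hn⟩ := lt_nfp_iff.1 hb
  refine ⟨g i b, ?_, (hg i b (hb.trans hδ)).2⟩
  calc g i b < H (H^[n] (a + 1)) := hgH i _ b hn
    _ = H^[n + 1] (a + 1) := (Function.iterate_succ_apply' H n _).symm
    _ ≤ nfp H (a + 1) := iterate_le_nfp H _ _

theorem isClubIn_setOf_isClosurePoint {c : Cardinal.{u}} (hc : c.IsRegular) (hc₀ : ℵ₀ < c)
    {ι : Type u} (hι : #ι < c) {R : ι → Ordinal.{u} → Ordinal.{u} → Prop}
    (hR : ∀ i, ∀ b < c.ord, ∃ x < c.ord, R i b x) :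
    IsClubIn c.ord {δ | δ < c.ord ∧ IsClosurePoint R δ} := by
  refine ⟨fun δ hδ => hδ.1, fun a ha => ?_, fun δ hδ _ hacc => ⟨hδ, fun i b hb => ?_⟩⟩
  · obtain ⟨δ, hδ, haδ, hR⟩ := exists_isClosurePoint_gt hc hc₀ hι hR ha
    exact ⟨δ, ⟨hδ, hR⟩, haδ⟩
  · obtain ⟨δ', ⟨-, hδ'⟩, hbδ', hδ'δ⟩ := hacc b hb
    obtain ⟨x, hxδ', hx⟩ := hδ' i b hbδ'
    exact ⟨x, hxδ'.trans hδ'δ, hx⟩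

theorem IsClubIn.inter_iInter {c : Cardinal.{u}} (hc : c.IsRegular) (hc₀ : ℵ₀ < c)
    {ι : Type u} (hι : #ι < c) {E : Set Ordinal.{u}} {C : ι → Set Ordinal.{u}}
    (hE : IsClubIn c.ord E) (hC : ∀ i, IsClubIn c.ord (C i)) :
    IsClubIn c.ord (E ∩ ⋂ i, C i) := by
  set S : Option ι → Set Ordinal.{u} := fun o => o.elim E C
  have hS : ∀ o, IsClubIn c.ord (S o) := fun o => o.rec hE hC
  suffices IsClubIn c.ord (⋂ o, S o) by rwa [iInter_option] at this
  refine ⟨fun δ hδ => hE.1 (mem_iInter.1 hδ none), fun a ha => ?_,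
    fun δ hδ hδ₀ hacc => mem_iInter.2 fun o => (hS o).2.2 δ hδ hδ₀ fun b hb => ?_⟩
  · have hι' : #(Option ι) < c := by
      rw [mk_option]
      exact add_lt_of_lt hc.aleph0_le hι (one_lt_aleph0.trans_le hc.aleph0_le)
    obtain ⟨δ, hδ, haδ, hcl⟩ := exists_isClosurePoint_gt hc hc₀ hι'
      (R := fun o b x => x ∈ S o ∧ b < x)
      (fun o b hb => (hS o).2.1 b hb |>.imp fun x hx => ⟨(hS o).1 hx.1, hx⟩) ha
    refine ⟨δ, mem_iInter.2 fun o => (hS o).2.2 δ hδ haδ.ne_bot fun b hb => ?_, haδ⟩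
    obtain ⟨x, hxδ, hx, hbx⟩ := hcl o b hb
    exact ⟨x, hx, hbx, hxδ⟩
  · obtain ⟨x, hx, hbx, hxδ⟩ := hacc b hb
    exact ⟨x, mem_iInter.1 hx o, hbx, hxδ⟩

noncomputable def iterSup (g : Ordinal.{u} → Ordinal.{u}) : Ordinal.{u} → Ordinal.{u} :=
  WellFoundedLT.fix fun α x => g (⨆ β : Iio α, x β β.2)

theorem iterSup_eq (g : Ordinal.{u} → Ordinal.{u}) (α : Ordinal.{u}) :
    iterSup g α = g (⨆ β : Iio α, iterSup g β) :=
  WellFoundedLT.fix_eq _ α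

theorem iterSup_strictMono {g : Ordinal.{u} → Ordinal.{u}} (hg : ∀ s, s < g s) :
    StrictMono (iterSup g) := fun β α h => by
  rw [iterSup_eq g α]
  exact (Ordinal.le_iSup (fun γ : Iio α => iterSup g γ) ⟨β, h⟩).trans_lt (hg _)

theorem IsClubIn.exists_cof_eq {κ : Ordinal.{u}} {C : Set Ordinal.{u}} (hC : IsClubIn κ C)
    {μ : Cardinal.{u}} (hμ : μ.IsRegular) (hμκ : μ < κ.cof) : ∃ δ ∈ C, δ.cof = μ := by
  have hnext : ∀ s, ∃ x, s < x ∧ (s < κ → x ∈ C) := fun s => by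
    by_cases hs : s < κ
    · obtain ⟨x, hx, hsx⟩ := hC.2.1 s hs
      exact ⟨x, hsx, fun _ => hx⟩
    · exact ⟨s + 1, lt_add_one s, fun h => absurd h hs⟩
  choose g hgt hgC using hnext
  set x := iterSup g
  have hxC : ∀ α < μ.ord, x α ∈ C := by
    intro α
    induction α using WellFoundedLT.induction with
    | _ α ih =>
      intro hα
      rw [show x α = _ from iterSup_eq g α]
      refine hgC _ (iSup_Iio_lt_of_card_lt_cof ((lt_ord.1 hα).trans hμκ) fun β => ?_)
      exact hC.1 (ih β β.2 (β.2.trans hα))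
  have hlim : IsSuccLimit μ.ord := isSuccLimit_ord hμ.aleph0_le
  have hmono : StrictMono fun α : Iio μ.ord => x α :=
    (iterSup_strictMono hgt).comp (Subtype.strictMono_coe _)
  have hxδ : ∀ α : Iio μ.ord, x α < ⨆ β : Iio μ.ord, x β := fun α =>
    (hmono (lt_add_one α.1 : _)).trans_le (Ordinal.le_iSup _ ⟨α + 1, hlim.add_one_lt α.2⟩)
  refine ⟨⨆ α : Iio μ.ord, x α, hC.2.2 _ ?_ ?_ fun b hb => ?_, ?_⟩
  · exact iSup_Iio_lt_of_card_lt_cof (by rwa [card_ord]) fun α => hC.1 (hxC α α.2)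
  · exact (hxδ ⟨0, hlim.bot_lt⟩).ne_bot
  · obtain ⟨α, hα⟩ := Ordinal.lt_iSup_iff.1 hb
    exact ⟨x α, hxC α α.2, hα, hxδ α⟩
  · rw [cof_iSup_Iio hmono hlim.isSuccPrelimit, hμ.cof_ord]

theorem IsClubIn.exists_unbounded_of_regressive {c μ : Cardinal.{u}} (hc : c.IsRegular)
    (hc₀ : ℵ₀ < c) (hμ : μ.IsRegular) (hμc : μ < c) {D : Set Ordinal.{u}}
    (hD : IsClubIn c.ord D) {b : Ordinal.{u} → Ordinal.{u}}
    (hb : ∀ i ∈ D, i.cof = μ → b i < i) :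
    ∃ a < c.ord, ∀ x < c.ord, ∃ i ∈ D, i.cof = μ ∧ b i ≤ a ∧ x < i := by
  by_contra! hbdd
  -- At a closure point `δ ∈ D` of cofinality `μ`, the bound for `b δ` is below `δ` yet bounds `δ`.
  have hone : #PUnit.{u + 1} < c := by simpa using hc.nat_lt 1
  have hcl := isClubIn_setOf_isClosurePoint hc hc₀ hone
    (R := fun _ a x => ∀ i ∈ D, i.cof = μ → b i ≤ a → i ≤ x) fun _ => hbdd
  obtain ⟨δ, ⟨hδD, hδ⟩, hδμ⟩ :=
    (hD.inter_iInter hc hc₀ hone fun _ => hcl).exists_cof_eq hμ (by rwa [hc.cof_ord])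
  obtain ⟨x, hxδ, hx⟩ := (mem_iInter.1 hδ ⟨⟩).2 ⟨⟩ (b δ) (hb δ hδD hδμ)
  exact (hx δ hδD hδμ le_rfl).not_gt hxδ

theorem exists_lt_apply_eq_of_unbounded {κ : Ordinal.{u}} {W : Set Ordinal.{u}}
    (hWκ : W ⊆ Iio κ) (hW : ∀ x < κ, ∃ i ∈ W, x < i) {X : Type v} {F : Ordinal.{u} → X}
    {T : Set X} (hF : MapsTo F W T) (hT : Cardinal.lift.{u} #T < Cardinal.lift.{v} κ.cof) :
    ∃ i ∈ W, ∃ j ∈ W, i < j ∧ F i = F j := by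
  by_contra! hinj
  have hWT : Cardinal.lift.{v} #W ≤ Cardinal.lift.{u + 1} #T := by
    refine lift_mk_le_lift_mk_of_injective (f := fun i : W => (⟨F i, hF i.2⟩ : T))
      fun i j hij => ?_
    have hij : F i = F j := congrArg Subtype.val hij
    rcases lt_trichotomy i.1 j.1 with h | h | h
    · exact absurd hij (hinj i i.2 j j.2 h)
    · exact Subtype.ext h
    · exact absurd hij.symm (hinj j j.2 i i.2 h)
  have hWcof : #W < Cardinal.lift.{u + 1} κ.cof := by
    have hT' : Cardinal.lift.{u + 1} #T < Cardinal.lift.{v} (Cardinal.lift.{u + 1} κ.cof) := by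
      simpa [Cardinal.lift_lift] using Cardinal.lift_strictMono.{_, u + 1} hT
    exact Cardinal.lift_lt.1 (hWT.trans_lt hT')
  obtain ⟨i, hi, hlt⟩ := hW _ (sSup_lt_of_lt_cof (by rwa [← lift_cof]) hWκ)
  exact hlt.not_ge (le_csSup ⟨κ, fun j hj => (hWκ hj).le⟩ hi)

theorem isRegular_of_powerlt_eq_self {lam : Cardinal} (hlam : ℵ₀ < lam) (hpow : lam ^< lam = lam) :
    lam.IsRegular := by
  refine ⟨hlam.le, not_lt.1 fun hcof => ?_⟩
  have := (lt_power_cof_ord hlam.le).trans_le (le_powerlt lam hcof)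
  exact this.ne hpow.symm

theorem exists_lt_forall_apply_eq_of_regressive {lam : Cardinal.{u}} (hlam : ℵ₀ < lam)
    (hpow : lam ^< lam = lam) {ι : Type u} (hι : #ι < lam) {E : Set Ordinal.{u}}
    (hE : IsClubIn (succ lam).ord E) (f : ι → Ordinal.{u} → Ordinal.{u})
    (hf : ∀ k, ∃ C, IsClubIn (succ lam).ord C ∧ ∀ β ∈ C, β.cof = lam → f k β < β) :
    ∃ i ∈ E, ∃ j ∈ E, i.cof = lam ∧ j.cof = lam ∧ i < j ∧ ∀ k, f k i = f k j := by
  have hsucc : (succ lam).IsRegular := isRegular_succ hlam.le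
  have hsucc₀ : ℵ₀ < succ lam := hlam.trans (lt_succ lam)
  choose C hC hfC using hf
  have hD := hE.inter_iInter hsucc hsucc₀ (hι.trans (lt_succ lam)) hC
  set b : Ordinal.{u} → Ordinal.{u} := fun i => ⨆ k, f k i + 1
  have hb : ∀ i ∈ E ∩ ⋂ k, C k, i.cof = lam → b i < i := fun i hi hcof =>
    iSup_add_one_lt_of_lt_cof (hcof ▸ hι) fun k => hfC k i (mem_iInter.1 hi.2 k) hcof
  obtain ⟨a, ha, hunb⟩ := hD.exists_unbounded_of_regressive hsucc hsucc₀
    (isRegular_of_powerlt_eq_self hlam hpow) (lt_succ lam) hb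
  have hT : Cardinal.lift.{u} #(univ.pi fun _ : ι => Iio a) <
      Cardinal.lift.{u + 1} (succ lam).ord.cof := by
    rw [Cardinal.lift_id'.{u, u + 1}, mk_congr (Equiv.Set.univPi _), mk_arrow,
      Cardinal.mk_Iio_ordinal, Cardinal.lift_lift, ← lift_power, hsucc.cof_ord, Cardinal.lift_lt]
    calc a.card ^ #ι ≤ lam ^ #ι := power_le_power_right (lt_succ_iff.1 (lt_ord.1 ha))
      _ ≤ lam ^< lam := le_powerlt lam hι
      _ = lam := hpow
      _ < succ lam := lt_succ lam
  obtain ⟨i, hi, j, hj, hij, hfij⟩ := exists_lt_apply_eq_of_unbounded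
    (W := {i | i ∈ E ∩ ⋂ k, C k ∧ i.cof = lam ∧ b i ≤ a}) (fun i hi => hD.1 hi.1)
    (fun x hx => let ⟨i, hi, hcof, hba, hxi⟩ := hunb x hx; ⟨i, ⟨hi, hcof, hba⟩, hxi⟩)
    (F := fun i k => f k i) (T := univ.pi fun _ => Iio a)
    (fun i hi k _ => (Ordinal.lt_iSup_add_one (fun k => f k i) k).trans_le hi.2.2) hT
  exact ⟨i, hi.1.1, j, hj.1.1, hi.2.1, hj.2.1, hij, congrFun hfij⟩

theorem exists_fixedPoint_of_eqOn_Iio {α : Type*} [Nonempty α]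
    (F : Ordinal.{u} → (Ordinal.{u} → α) → α)
    (hF : ∀ ζ x y, EqOn x y (Iio ζ) → F ζ x = F ζ y) :
    ∃ x : Ordinal.{u} → α, ∀ ζ, x ζ = F ζ x := by
  classical
  refine ⟨WellFoundedLT.fix fun ζ x => F ζ fun ξ => if h : ξ < ζ then x ξ h
    else Classical.arbitrary α, fun ζ => ?_⟩
  rw [WellFoundedLT.fix_eq]
  exact hF ζ _ _ fun ξ hξ => dif_pos hξ

/-- If `λ > ℵ₀` satisfies `λ^{<λ} = λ`, `ε < λ` is a limit ordinal and the forcing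
notion `P` satisfies `*^ε_λ`, then `P` satisfies the `λ⁺`-chain condition: among any
`λ⁺` conditions, two are compatible. -/
theorem star_implies_cc (lam : Cardinal) (hlam : Cardinal.aleph0 < lam)
    (hpow : Cardinal.powerlt lam lam = lam)
    (ε : Ordinal) (hεlim : Order.IsSuccLimit ε) (hεlt : ε < lam.ord)
    (P : Type*) [PartialOrder P] (bot : P) (hbot : ∀ x, bot ≤ x)
    (hstar : SatisfiesStar lam ε P bot)
    (p : Ordinal → P) :
    ∃ i j, i < j ∧ j < (Order.succ lam).ord ∧ ∃ r, p i ≤ r ∧ p j ≤ r := by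
  obtain ⟨σq, σf, hσ, hσq₀, -, hplay⟩ := hstar
  have : Nonempty P := ⟨bot⟩
  obtain ⟨q, hq⟩ := exists_fixedPoint_of_eqOn_Iio (fun ζ q => if ζ = 0 then p else σq ζ q)
    fun ζ x y hxy => by rw [(hσ ζ x y hxy).1]
  have hq_zero : q 0 = p := by simpa using hq 0
  have hlegal : ∀ ζ < ε, ∀ i < (Order.succ lam).ord, σq ζ q i ≤ q ζ i := by
    intro ζ _ i _
    rcases eq_or_ne ζ 0 with rfl | hζ
    · rw [hσq₀]
      exact hbot _
    · rw [hq ζ, if_neg hζ]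
  obtain ⟨-, hreg, E, hE, hwin⟩ := hplay q hlegal
  obtain ⟨i, hiE, j, hjE, hi, hj, hij, hfij⟩ :=
    exists_lt_forall_apply_eq_of_regressive hlam hpow (ι := ε.ToType)
      (by rwa [mk_toType, ← lt_ord]) hE (fun z => σf (ToType.toOrd z) q)
      fun z => hreg _ (ToType.toOrd z).2
  obtain ⟨r, hri, hrj⟩ := hwin i hiE j hjE hi hj hij fun ζ hζ => by
    simpa using hfij (ToType.mk ⟨ζ, hζ⟩)
  exact ⟨i, j, hij, hE.1 hjE, r, hq_zero ▸ hri 0 hεlim.bot_lt, hq_zero ▸ hrj 0 hεlim.bot_lt⟩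
end

section
/- For every integer n ≥ 1, the sum ∑_{l=1}^{n} 1/((n−l+1)·ln(l+2)) is strictly less than 4. -/
/-!
Split the sum at `m = ⌊n/2⌋`. For `l ≤ m` we have `n - l + 1 ≥ n - m + 1 ≥ m` and
`log (l + 2) ≥ log 3 > 1`, so these `m` terms total at most `1 / log 3 < 1`. For `l > m` one has
`log (l + 2) ≥ log (m + 3)`, and the remaining factors `1 / (n - l + 1)` form the harmonic sum
`H_{n-m} ≤ 1 + log (n - m)`; since `n - m ≤ m + 3`, this part is less than `2`.
-/

open Finset Real

theorem one_lt_log_three : 1 < log 3 :=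
  lt_trans (by norm_num) log_three_gt_d9

theorem sum_Icc_one_div_le_one_add_log (M : ℕ) : ∑ k ∈ Icc 1 M, (1 : ℝ) / k ≤ 1 + log M := by
  simpa [harmonic_eq_sum_Icc] using harmonic_le_one_add_log M

theorem sum_Ioc_comp_sub_add_one {M : Type*} [AddCommMonoid M] (g : ℕ → M) (m n : ℕ) :
    ∑ l ∈ Ioc m n, g (n - l + 1) = ∑ k ∈ Icc 1 (n - m), g k := by
  refine sum_nbij' (fun l ↦ n - l + 1) (fun k ↦ n - k + 1) ?_ ?_ ?_ ?_ fun _ _ ↦ rfl <;>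
    intro l hl <;> simp only [mem_Ioc, mem_Icc] at hl ⊢ <;> omega

theorem sum_Icc_one_div_mul_log_le_one_div_log_three {m n : ℕ} (hm : m ≤ n - m + 1) :
    ∑ l ∈ Icc 1 m, 1 / (((n - l + 1 : ℕ) : ℝ) * log ((l : ℝ) + 2)) ≤ 1 / log 3 := by
  have hlog := one_lt_log_three
  have hterm : ∀ l ∈ Icc 1 m, 1 / (((n - l + 1 : ℕ) : ℝ) * log ((l : ℝ) + 2)) ≤
      1 / (((n - m + 1 : ℕ) : ℝ) * log 3) := by
    intro l hl
    rw [mem_Icc] at hl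
    have hl1 : (1 : ℝ) ≤ l := by exact_mod_cast hl.1
    gcongr
    · omega
    · linarith
  calc _ ≤ m • (1 / (((n - m + 1 : ℕ) : ℝ) * log 3)) := by
        simpa using sum_le_card_nsmul _ _ _ hterm
    _ = (m / (n - m + 1 : ℕ)) * (1 / log 3) := by rw [nsmul_eq_mul]; field_simp
    _ ≤ 1 * (1 / log 3) := by
        gcongr
        exact div_le_one_of_le₀ (by exact_mod_cast hm) (Nat.cast_nonneg _)
    _ = 1 / log 3 := one_mul _

theorem sum_Ioc_one_div_mul_log_le_one_add_log_div (m n : ℕ) :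
    ∑ l ∈ Ioc m n, 1 / (((n - l + 1 : ℕ) : ℝ) * log ((l : ℝ) + 2)) ≤
      (1 + log (n - m : ℕ)) / log (m + 3) := by
  have hlog : 0 < log ((m : ℝ) + 3) := log_pos (by linarith [m.cast_nonneg (α := ℝ)])
  calc _ ≤ ∑ l ∈ Ioc m n, 1 / (((n - l + 1 : ℕ) : ℝ) * log (m + 3)) := by
        refine sum_le_sum fun l hl ↦ ?_
        rw [mem_Ioc] at hl
        have hml : (m : ℝ) + 1 ≤ l := by exact_mod_cast hl.1
        gcongr 1 / (_ * log ?_)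
        linarith
    _ = (∑ k ∈ Icc 1 (n - m), (1 : ℝ) / k) / log (m + 3) := by
        rw [← sum_Ioc_comp_sub_add_one (fun k ↦ (1 : ℝ) / k), sum_div]
        refine sum_congr rfl fun l _ ↦ ?_
        rw [div_div]
    _ ≤ (1 + log (n - m : ℕ)) / log (m + 3) := by
        gcongr
        exact sum_Icc_one_div_le_one_add_log _

/-- For every integer `n ≥ 1`, `∑_{l=1}^{n} 1/((n−l+1)·ln(l+2)) < 4`. -/
theorem sum_one_div_mul_log_lt_four (n : ℕ) (hn : 1 ≤ n) :
    ∑ l ∈ Finset.Icc 1 n, 1 / (((n - l + 1 : ℕ) : ℝ) * Real.log ((l : ℝ) + 2)) < 4 := by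
  set m := n / 2
  have hlog3 := one_lt_log_three
  have hlog : 1 < log ((m : ℝ) + 3) :=
    hlog3.trans_le (log_le_log (by norm_num) (by linarith [m.cast_nonneg (α := ℝ)]))
  have hnm : log ((n - m : ℕ) : ℝ) ≤ log ((m : ℝ) + 3) :=
    log_le_log (by norm_cast; omega) (by norm_cast; omega)
  have hhead : 1 / log 3 < 1 := (div_lt_one (by linarith)).2 hlog3
  have htail : (1 + log (n - m : ℕ)) / log (m + 3) < 2 :=
    (div_lt_iff₀ (by linarith)).2 (by linarith)
  have hIcc (k : ℕ) : Icc 1 k = Ioc 0 k := by simpa using Icc_add_one_left_eq_Ioc 0 k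
  rw [hIcc, ← sum_Ioc_consecutive _ (Nat.zero_le m) (Nat.div_le_self n 2), ← hIcc]
  linarith [sum_Icc_one_div_mul_log_le_one_div_log_three (n := n) (m := m) (by omega),
    sum_Ioc_one_div_mul_log_le_one_add_log_div m n]
end

section
/- For every integer n ≥ 1, the sum ∑_{l=1}^{n} 1/((n−l+1)·ln(l+2)) is at most 1/ln 3 + 1/ln 2 + 1. -/
open Finset Real

private theorem reindex_aux (n k : ℕ) :
    ∑ l ∈ Ioc k n, (1:ℝ) / ((n - l + 1 : ℕ) : ℝ) = (harmonic (n - k) : ℝ) := by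
  rw [harmonic, Rat.cast_sum]
  refine Finset.sum_nbij' (i := fun l => n - l) (j := fun m => n - m) ?hi ?hj ?li ?ri ?h
  case hi => intro a ha; simp only [mem_Ioc] at ha; simp only [mem_range]; omega
  case hj => intro b hb; simp only [mem_range] at hb; simp only [mem_Ioc]; omega
  case li => intro a ha; simp only [mem_Ioc] at ha; omega
  case ri => intro b hb; simp only [mem_range] at hb; omega
  case h =>
    intro a ha; simp only [mem_Ioc] at ha
    rw [one_div]
    have : n - a + 1 = n - a + 1 := rfl
    push_cast
    ring

/-- For every integer `n ≥ 1`,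
`∑_{l=1}^{n} 1/((n−l+1)·ln(l+2)) ≤ 1/ln 3 + 1/ln 2 + 1`. -/
theorem sum_one_div_mul_log_le (n : ℕ) (hn : 1 ≤ n) :
    ∑ l ∈ Finset.Icc 1 n, 1 / (((n - l + 1 : ℕ) : ℝ) * Real.log ((l : ℝ) + 2)) ≤
      1 / Real.log 3 + 1 / Real.log 2 + 1 := by
  have hlog3 : (1:ℝ) < Real.log 3 := by
    rw [Real.lt_log_iff_exp_lt (by norm_num)]
    calc Real.exp 1 < 2.7182818286 := Real.exp_one_lt_d9
      _ < 3 := by norm_num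
  have hlog3' : (0:ℝ) < Real.log 3 := by linarith
  have hlog2 : (0:ℝ) < Real.log 2 := Real.log_pos (by norm_num)
  have hlog23 : Real.log 2 ≤ Real.log 3 := Real.log_le_log (by norm_num) (by norm_num)
  set k := n / 2 with hkdef
  have hk : k ≤ n := Nat.div_le_self n 2
  have hsplit : ∑ l ∈ Finset.Icc 1 n, 1 / (((n - l + 1 : ℕ) : ℝ) * Real.log ((l : ℝ) + 2))
      = (∑ l ∈ Finset.Ioc 0 k, 1 / (((n - l + 1 : ℕ) : ℝ) * Real.log ((l : ℝ) + 2)))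
      + ∑ l ∈ Finset.Ioc k n, 1 / (((n - l + 1 : ℕ) : ℝ) * Real.log ((l : ℝ) + 2)) := by
    have he : Finset.Icc 1 n = Finset.Ioc 0 n := by ext x; simp [Nat.lt_iff_add_one_le]
    rw [he, Finset.sum_Ioc_consecutive _ (Nat.zero_le k) hk]
  rw [hsplit]
  have hlogk3 : Real.log 3 ≤ Real.log ((k:ℝ) + 3) := by
    apply Real.log_le_log (by norm_num); linarith [Nat.cast_nonneg (α := ℝ) k]
  have hlogk3' : (0:ℝ) < Real.log ((k:ℝ) + 3) := by linarith
  -- piece B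
  have hB : (∑ l ∈ Finset.Ioc 0 k, 1 / (((n - l + 1 : ℕ) : ℝ) * Real.log ((l : ℝ) + 2)))
      ≤ 1 / Real.log 3 := by
    calc ∑ l ∈ Finset.Ioc 0 k, 1 / (((n - l + 1 : ℕ) : ℝ) * Real.log ((l : ℝ) + 2))
        ≤ ∑ l ∈ Finset.Ioc 0 k, 1 / (((k:ℝ) + 1) * Real.log 3) := by
          apply Finset.sum_le_sum
          intro l hl
          simp only [mem_Ioc] at hl
          have h1 : ((k:ℝ) + 1) ≤ ((n - l + 1 : ℕ) : ℝ) := by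
            have : k + 1 ≤ n - l + 1 := by omega
            exact_mod_cast this
          have h2 : Real.log 3 ≤ Real.log ((l:ℝ) + 2) := by
            apply Real.log_le_log (by norm_num)
            have : (1:ℝ) ≤ (l:ℝ) := by exact_mod_cast hl.1
            linarith
          apply one_div_le_one_div_of_le (by positivity)
          apply mul_le_mul h1 h2 (by linarith) (by positivity)
      _ = (k : ℝ) * (1 / (((k:ℝ) + 1) * Real.log 3)) := by
          rw [Finset.sum_const, Nat.card_Ioc]; simp
      _ ≤ 1 / Real.log 3 := by
          rw [mul_one_div, div_le_div_iff₀ (by positivity) hlog3']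
          have : (0:ℝ) ≤ (k:ℝ) := Nat.cast_nonneg k
          nlinarith
  -- piece A
  have hA : (∑ l ∈ Finset.Ioc k n, 1 / (((n - l + 1 : ℕ) : ℝ) * Real.log ((l : ℝ) + 2)))
      ≤ 1 / Real.log 3 + 1 := by
    have step1 : (∑ l ∈ Finset.Ioc k n, 1 / (((n - l + 1 : ℕ) : ℝ) * Real.log ((l : ℝ) + 2)))
        ≤ ∑ l ∈ Finset.Ioc k n, (1 / Real.log ((k:ℝ) + 3)) * (1 / ((n - l + 1 : ℕ) : ℝ)) := by
      apply Finset.sum_le_sum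
      intro l hl
      simp only [mem_Ioc] at hl
      have hpos : (0:ℝ) < ((n - l + 1 : ℕ) : ℝ) := by
        have : 1 ≤ n - l + 1 := by omega
        exact_mod_cast Nat.lt_of_lt_of_le Nat.zero_lt_one this
      have h2 : Real.log ((k:ℝ) + 3) ≤ Real.log ((l:ℝ) + 2) := by
        apply Real.log_le_log (by positivity)
        have : (k:ℝ) + 1 ≤ (l:ℝ) := by exact_mod_cast hl.1
        linarith
      rw [one_div_mul_one_div]
      apply one_div_le_one_div_of_le (by positivity)
      rw [mul_comm]
      exact mul_le_mul_of_nonneg_left h2 (le_of_lt hpos)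
    have step2 : ∑ l ∈ Finset.Ioc k n, (1 / Real.log ((k:ℝ) + 3)) * (1 / ((n - l + 1 : ℕ) : ℝ))
        = (1 / Real.log ((k:ℝ) + 3)) * (harmonic (n - k) : ℝ) := by
      rw [← Finset.mul_sum, reindex_aux]
    have step3 : (harmonic (n - k) : ℝ) ≤ 1 + Real.log ((k:ℝ) + 3) := by
      calc (harmonic (n - k) : ℝ) ≤ 1 + Real.log (n - k : ℕ) := harmonic_le_one_add_log _
        _ ≤ 1 + Real.log ((k:ℝ) + 3) := by
            have hpos : (0:ℝ) < ((n - k : ℕ) : ℝ) := by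
              exact_mod_cast Nat.lt_of_lt_of_le Nat.zero_lt_one (by omega : 1 ≤ n - k)
            have hle : ((n - k : ℕ) : ℝ) ≤ (k:ℝ) + 3 := by
              have h : n - k ≤ k + 3 := by omega
              calc ((n - k : ℕ) : ℝ) ≤ ((k + 3 : ℕ) : ℝ) := by exact_mod_cast h
                _ = (k:ℝ) + 3 := by push_cast; ring
            have := Real.log_le_log hpos hle
            linarith
    calc _ ≤ _ := step1
      _ = _ := step2
      _ ≤ (1 / Real.log ((k:ℝ) + 3)) * (1 + Real.log ((k:ℝ) + 3)) := by
          apply mul_le_mul_of_nonneg_left step3 (by positivity)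
      _ = 1 / Real.log ((k:ℝ) + 3) + 1 := by field_simp
      _ ≤ 1 / Real.log 3 + 1 := by gcongr
  calc _ ≤ (1 / Real.log 3) + (1 / Real.log 3 + 1) := add_le_add hB hA
    _ ≤ 1 / Real.log 3 + 1 / Real.log 2 + 1 := by
        have : 1 / Real.log 3 ≤ 1 / Real.log 2 := by gcongr
        linarith
end

section
/- For every integer n ≥ 1, the sum ∑_{l=1}^{⌊n/2⌋} 1/((n−l+1)·ln(l+2)) is at most 1/ln 3 (the empty sum being 0). -/
/-- For every integer `n ≥ 1`,
`∑_{l=1}^{⌊n/2⌋} 1/((n−l+1)·ln(l+2)) ≤ 1/ln 3`. -/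
theorem sum_first_half_le (n : ℕ) (hn : 1 ≤ n) :
    ∑ l ∈ Finset.Icc 1 (n / 2), 1 / (((n - l + 1 : ℕ) : ℝ) * Real.log ((l : ℝ) + 2)) ≤
      1 / Real.log 3 := by
  set m := n / 2 with hm
  have hlog3 : (0:ℝ) < Real.log 3 := Real.log_pos (by norm_num)
  have step : ∑ l ∈ Finset.Icc 1 m, 1 / (((n - l + 1 : ℕ) : ℝ) * Real.log ((l : ℝ) + 2))
      ≤ ∑ _l ∈ Finset.Icc 1 m, 1 / (((m + 1 : ℕ) : ℝ) * Real.log 3) := by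
    apply Finset.sum_le_sum
    intro l hl
    simp only [Finset.mem_Icc] at hl
    have hln : m + 1 ≤ n - l + 1 := by omega
    have hlog : Real.log 3 ≤ Real.log ((l:ℝ) + 2) := by
      apply Real.log_le_log (by norm_num)
      have : (1:ℝ) ≤ l := by exact_mod_cast hl.1
      linarith
    apply one_div_le_one_div_of_le
    · positivity
    · exact mul_le_mul (by exact_mod_cast hln) hlog hlog3.le (by positivity)
  refine step.trans ?_
  rw [Finset.sum_const]
  simp only [Nat.card_Icc, nsmul_eq_mul, Nat.add_sub_cancel]
  have key : ((m:ℝ)) * (1 / (((m + 1 : ℕ) : ℝ) * Real.log 3))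
      = ((m:ℝ) / ((m:ℝ) + 1)) * (1 / Real.log 3) := by
    push_cast
    field_simp
  rw [key]
  have h1 : (m:ℝ) / ((m:ℝ) + 1) ≤ 1 := by
    rw [div_le_one (by positivity)]; linarith
  nlinarith [one_div_pos.mpr hlog3]
end

section
/- Let I be a linear order and x ∈ B_I with support S = {i ∈ I : a_i ≠ 0} (finite). Then the set of values {f_{t̄}(x) : t̄ a strictly I-increasing finite sequence with all entries in S} is finite, and ‖x‖_F equals the maximum of |f_{t̄}(x)| over such sequences t̄; in particular the supremum defining ‖x‖_F is attained: there is a strictly I-increasing finite sequence t̄ with entries in S such that ‖x‖_F = |f_{t̄}(x)|. -/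
/-!
Write `f_t(x) = ∑ₗ cₗ / log (l + 2)` with `cₗ = x (t l)`. The weights are positive and
decreasing, so deleting the nonpositive coefficients from `(cₗ)` can only increase the sum: the
positive ones move to earlier slots with larger weights. Applied to `x` and `-x`, this bounds
`|f_t(x)|` by `|f_s(x)|` for a subsequence `s` of `t` with entries in the support. Strictly
increasing sequences in the support are exactly the sublists of the sorted support, so there
are finitely many, and the largest `|f_s(x)|` among them is `‖x‖_F`.
-/

/-- For a strictly increasing finite sequence `t : Fin n → I`, the functional
`f_t(∑ a_i x_i) = ∑_{l<n} a_{t l}/ln(l+2)` on `B_I = (I →₀ ℚ)`. -/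
noncomputable def seqFunctional {I : Type*} [LinearOrder I] {n : ℕ}
    (t : Fin n → I) (x : I →₀ ℚ) : ℝ :=
  ∑ l : Fin n, (x (t l) : ℝ) / Real.log ((l : ℕ) + 2)

/-- The set of values `|f(x)|` for `f ∈ F`, i.e. over all strictly increasing
finite sequences of elements of `I`. -/
def normValueSet {I : Type*} [LinearOrder I] (x : I →₀ ℚ) : Set ℝ :=
  {r : ℝ | ∃ (n : ℕ) (t : Fin n → I), StrictMono t ∧ r = |seqFunctional t x|}

/-- The norm `‖x‖_F = sup {|f(x)| : f ∈ F}` on `B_I`. -/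
noncomputable def Fnorm {I : Type*} [LinearOrder I] (x : I →₀ ℚ) : ℝ :=
  sSup (normValueSet x)

noncomputable def weightedSum : ℕ → List ℝ → ℝ
  | _, [] => 0
  | k, c :: cs => c / Real.log ((k : ℝ) + 2) + weightedSum (k + 1) cs

theorem weightedSum_ofFn {n : ℕ} (k : ℕ) (c : Fin n → ℝ) :
    weightedSum k (List.ofFn c) = ∑ l : Fin n, c l / Real.log (((l + k : ℕ) : ℝ) + 2) := by
  induction n generalizing k with
  | zero => simp [weightedSum]
  | succ n ih =>
    simp only [List.ofFn_succ, weightedSum, ih, Fin.sum_univ_succ, Fin.val_zero, Fin.val_succ,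
      zero_add]
    congr 3 with l
    ring_nf

theorem weightedSum_map_neg (k : ℕ) (cs : List ℝ) :
    weightedSum k (cs.map (- ·)) = -weightedSum k cs := by
  induction cs generalizing k with
  | nil => simp [weightedSum]
  | cons c cs ih => simp only [List.map_cons, weightedSum, ih]; ring

theorem weightedSum_le_weightedSum_filter_pos {k m : ℕ} (hkm : k ≤ m) (cs : List ℝ) :
    weightedSum m cs ≤ weightedSum k (cs.filter (0 < ·)) := by
  induction cs generalizing k m with
  | nil => simp [weightedSum]
  | cons c cs ih =>
    have hlog_pos : 0 < Real.log ((k : ℝ) + 2) := Real.log_pos (by norm_cast; omega)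
    by_cases hc : 0 < c
    · have hlog_le : Real.log ((k : ℝ) + 2) ≤ Real.log ((m : ℝ) + 2) :=
        Real.log_le_log (by positivity) (by gcongr)
      rw [List.filter_cons_of_pos (by simpa using hc), weightedSum, weightedSum]
      gcongr
      exact ih (by omega)
    · rw [List.filter_cons_of_neg (by simpa using hc), weightedSum]
      have hterm_nonpos : c / Real.log ((m : ℝ) + 2) ≤ 0 :=
        div_nonpos_of_nonpos_of_nonneg (not_lt.1 hc) (Real.log_nonneg (by linarith))
      linarith [ih (show k ≤ m + 1 by omega)]

section

open List

variable {I : Type*}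

noncomputable def listFunctional (x : I →₀ ℚ) (l : List I) : ℝ :=
  weightedSum 0 (l.map fun i => (x i : ℝ))

theorem listFunctional_neg (x : I →₀ ℚ) (l : List I) :
    listFunctional (-x) l = -listFunctional x l := by
  simp [listFunctional, ← weightedSum_map_neg, Function.comp_def]

theorem listFunctional_le_filter_pos (x : I →₀ ℚ) (l : List I) :
    listFunctional x l ≤ listFunctional x (l.filter fun i => 0 < x i) := by
  simpa [listFunctional, List.filter_map, Function.comp_def] using
    weightedSum_le_weightedSum_filter_pos le_rfl (l.map fun i => (x i : ℝ))

theorem exists_sublist_abs_listFunctional_le (x : I →₀ ℚ) (l : List I) :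
    ∃ l', l' <+ l ∧ (∀ i ∈ l', i ∈ x.support) ∧ |listFunctional x l| ≤ |listFunctional x l'| := by
  have hpos := listFunctional_le_filter_pos x l
  have hneg := listFunctional_le_filter_pos (-x) l
  rw [listFunctional_neg, listFunctional_neg] at hneg
  rcases le_total (-listFunctional x l) (listFunctional x l) with h | h
  · refine ⟨l.filter fun i => 0 < x i, filter_sublist, fun i hi => ?_, ?_⟩
    · simpa using (ne_of_lt (by simpa using List.of_mem_filter hi)).symm
    · rw [abs_of_nonneg (by linarith)]
      exact hpos.trans (le_abs_self _)
  · refine ⟨l.filter fun i => 0 < (-x) i, filter_sublist, fun i hi => ?_, ?_⟩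
    · simpa using ne_of_lt (by simpa using List.of_mem_filter hi)
    · rw [abs_of_nonpos (by linarith)]
      exact hneg.trans (neg_le_abs _)

section

variable [LinearOrder I]

theorem seqFunctional_eq_listFunctional_ofFn {n : ℕ} (t : Fin n → I) (x : I →₀ ℚ) :
    seqFunctional t x = listFunctional x (List.ofFn t) := by
  simp [listFunctional, List.map_ofFn, weightedSum_ofFn, seqFunctional]

theorem Finset.sublist_sort_iff {s : Finset I} {l : List I} :
    l <+ s.sort (· ≤ ·) ↔ l.SortedLT ∧ ∀ i ∈ l, i ∈ s := by
  refine ⟨fun h => ⟨(s.sortedLT_sort.pairwise.sublist h).sortedLT,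
    fun i hi => (Finset.mem_sort _).1 (h.subset hi)⟩, fun ⟨hl, hs⟩ => ?_⟩
  exact List.sublist_of_subperm_of_sortedLE
    (hl.nodup.subperm fun i hi => (Finset.mem_sort _).2 (hs i hi)) hl.sortedLE
    s.sortedLT_sort.sortedLE

theorem Finset.ofFn_sublist_sort_iff {s : Finset I} {n : ℕ} {t : Fin n → I} :
    List.ofFn t <+ s.sort (· ≤ ·) ↔ StrictMono t ∧ ∀ k, t k ∈ s := by
  rw [Finset.sublist_sort_iff, List.sortedLT_ofFn_iff, List.forall_mem_ofFn_iff]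

theorem exists_sublist_sort_isGreatest_normValueSet (x : I →₀ ℚ) :
    ∃ l, l <+ x.support.sort (· ≤ ·) ∧ IsGreatest (normValueSet x) |listFunctional x l| := by
  obtain ⟨l, hl, hmax⟩ := ((x.support.sort (· ≤ ·)).sublists.toFinset).exists_max_image
    (|listFunctional x ·|) ⟨[], by simp⟩
  simp only [List.mem_toFinset, List.mem_sublists] at hl hmax
  refine ⟨l, hl, ⟨l.length, l.get, ?_, ?_⟩, ?_⟩
  · exact (Finset.ofFn_sublist_sort_iff.1 (by rwa [List.ofFn_get])).1
  · rw [seqFunctional_eq_listFunctional_ofFn, List.ofFn_get]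
  · rintro _ ⟨n, t, ht, rfl⟩
    obtain ⟨l', hl', hsupp, hle⟩ :=
      exists_sublist_abs_listFunctional_le x (List.ofFn t)
    rw [seqFunctional_eq_listFunctional_ofFn]
    refine hle.trans (hmax l' (Finset.sublist_sort_iff.2 ⟨?_, hsupp⟩))
    exact ((List.sortedLT_ofFn_iff.2 ht).pairwise.sublist hl').sortedLT

end

end

/-- The set of values of `f_t(x)` over strictly increasing sequences `t` with entries
in the (finite) support of `x` is finite, `‖x‖_F` bounds all of them, and the
supremum defining `‖x‖_F` is attained by such a sequence. -/
theorem Fnorm_attained {I : Type*} [LinearOrder I] (x : I →₀ ℚ) :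
    {r : ℝ | ∃ (n : ℕ) (t : Fin n → I), StrictMono t ∧ (∀ l, t l ∈ x.support) ∧
        r = seqFunctional t x}.Finite ∧
      (∀ (n : ℕ) (t : Fin n → I), StrictMono t → (∀ l, t l ∈ x.support) →
        |seqFunctional t x| ≤ Fnorm x) ∧
      ∃ (n : ℕ) (t : Fin n → I), StrictMono t ∧ (∀ l, t l ∈ x.support) ∧
        Fnorm x = |seqFunctional t x| := by
  obtain ⟨l, hl, hgreatest⟩ := exists_sublist_sort_isGreatest_normValueSet x
  have hFnorm : Fnorm x = |listFunctional x l| := hgreatest.csSup_eq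
  refine ⟨?_, fun n t ht _ => hFnorm ▸ hgreatest.2 ⟨n, t, ht, rfl⟩, ?_⟩
  · refine ((x.support.sort (· ≤ ·)).sublists.finite_toSet.image (listFunctional x)).subset ?_
    rintro _ ⟨n, t, ht, hsupp, rfl⟩
    exact ⟨List.ofFn t, List.mem_sublists.2 (Finset.ofFn_sublist_sort_iff.2 ⟨ht, hsupp⟩),
      (seqFunctional_eq_listFunctional_ofFn t x).symm⟩
  · obtain ⟨ht, hsupp⟩ := Finset.ofFn_sublist_sort_iff.1 ((List.ofFn_get l).symm ▸ hl)
    exact ⟨l.length, l.get, ht, hsupp, by rw [hFnorm, seqFunctional_eq_listFunctional_ofFn,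
      List.ofFn_get]⟩
end

section
/- Let I be an infinite linear order. Then ‖·‖_F is a norm on the ℚ-vector space B_I: for all x, y ∈ B_I and q ∈ ℚ, (i) 0 ≤ ‖x‖_F < ∞; (ii) ‖x‖_F = 0 if and only if x = 0; (iii) ‖q·x‖_F = |q|·‖x‖_F; (iv) ‖x + y‖_F ≤ ‖x‖_F + ‖y‖_F. Moreover the cardinality of B_I equals the cardinality of I. -/
/-!
Since `ln (l + 2) ≥ ln 2`, every functional satisfies `|f_t(x)| ≤ (∑ᵢ |aᵢ|) / ln 2`, so the
supremum is finite. Each `f_t` is linear, which gives homogeneity and the triangle inequality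
after passing to the supremum, and the one-term functional `f_{(i)}(x) = aᵢ / ln 2` shows that
`‖x‖_F = 0` forces every coordinate to vanish. Finally `|I →₀ ℚ| = max |I| ℵ₀ = |I|`.
-/

open Pointwise

theorem Finset.sum_comp_le_sum_of_injective {κ ι M : Type*} [Fintype κ] [AddCommMonoid M]
    [PartialOrder M] [IsOrderedAddMonoid M] {t : κ → ι} (ht : Function.Injective t)
    {g : ι → M} (hg : 0 ≤ g) {s : Finset ι} (hs : ∀ i ∉ s, g i = 0) :
    ∑ l, g (t l) ≤ ∑ i ∈ s, g i := by
  classical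
  calc ∑ l, g (t l) = ∑ i ∈ Finset.univ.map ⟨t, ht⟩, g i := by rw [Finset.sum_map]; rfl
    _ ≤ ∑ i ∈ Finset.univ.map ⟨t, ht⟩ ∪ s, g i :=
      Finset.sum_le_sum_of_subset_of_nonneg Finset.subset_union_left fun i _ _ => hg i
    _ = ∑ i ∈ s, g i :=
      (Finset.sum_subset Finset.subset_union_right fun i _ hi => hs i hi).symm

section seqFunctional

variable {I : Type*} [LinearOrder I] {n : ℕ}

theorem seqFunctional_add (t : Fin n → I) (x y : I →₀ ℚ) :
    seqFunctional t (x + y) = seqFunctional t x + seqFunctional t y := by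
  simp [seqFunctional, ← Finset.sum_add_distrib, add_div]

theorem seqFunctional_smul (t : Fin n → I) (q : ℚ) (x : I →₀ ℚ) :
    seqFunctional t (q • x) = q * seqFunctional t x := by
  simp [seqFunctional, Finset.mul_sum, mul_div_assoc]

theorem seqFunctional_const_fin_one (i : I) (x : I →₀ ℚ) :
    seqFunctional (fun _ : Fin 1 => i) x = x i / Real.log 2 := by
  simp [seqFunctional]

theorem abs_seqFunctional_le {t : Fin n → I} (ht : Function.Injective t) (x : I →₀ ℚ) :
    |seqFunctional t x| ≤ (∑ i ∈ x.support, |(x i : ℝ)|) / Real.log 2 := by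
  have hlog2 : 0 < Real.log 2 := Real.log_pos one_lt_two
  calc |seqFunctional t x| ≤ ∑ l, |(x (t l) : ℝ) / Real.log ((l : ℕ) + 2)| :=
        Finset.abs_sum_le_sum_abs _ _
    _ ≤ ∑ l, |(x (t l) : ℝ)| / Real.log 2 := by
        gcongr with l
        have hlog : Real.log 2 ≤ Real.log ((l : ℕ) + 2) :=
          Real.log_le_log two_pos (le_add_of_nonneg_left (Nat.cast_nonneg _))
        rw [abs_div, abs_of_pos (hlog2.trans_le hlog)]
        gcongr
    _ = (∑ l, |(x (t l) : ℝ)|) / Real.log 2 := (Finset.sum_div _ _ _).symm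
    _ ≤ (∑ i ∈ x.support, |(x i : ℝ)|) / Real.log 2 := by
        gcongr
        refine Finset.sum_comp_le_sum_of_injective (g := fun i => |(x i : ℝ)|) ht
          (fun i => abs_nonneg _) fun i hi => ?_
        simp [Finsupp.notMem_support_iff.mp hi]

end seqFunctional

section Fnorm

variable {I : Type*} [LinearOrder I]

theorem zero_mem_normValueSet (x : I →₀ ℚ) : (0 : ℝ) ∈ normValueSet x :=
  ⟨0, Fin.elim0, fun i => i.elim0, by simp [seqFunctional]⟩

theorem bddAbove_normValueSet (x : I →₀ ℚ) : BddAbove (normValueSet x) := by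
  refine ⟨(∑ i ∈ x.support, |(x i : ℝ)|) / Real.log 2, ?_⟩
  rintro r ⟨n, t, ht, rfl⟩
  exact abs_seqFunctional_le ht.injective x

theorem abs_seqFunctional_le_fnorm {n : ℕ} {t : Fin n → I} (ht : StrictMono t) (x : I →₀ ℚ) :
    |seqFunctional t x| ≤ Fnorm x :=
  le_csSup (bddAbove_normValueSet x) ⟨n, t, ht, rfl⟩

theorem fnorm_nonneg (x : I →₀ ℚ) : 0 ≤ Fnorm x :=
  le_csSup (bddAbove_normValueSet x) (zero_mem_normValueSet x)

theorem normValueSet_smul (q : ℚ) (x : I →₀ ℚ) :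
    normValueSet (q • x) = |(q : ℝ)| • normValueSet x := by
  ext r
  constructor
  · rintro ⟨n, t, ht, rfl⟩
    exact ⟨|seqFunctional t x|, ⟨n, t, ht, rfl⟩, by rw [seqFunctional_smul, abs_mul]; rfl⟩
  · rintro ⟨s, ⟨n, t, ht, rfl⟩, rfl⟩
    exact ⟨n, t, ht, by rw [seqFunctional_smul, abs_mul]; rfl⟩

theorem fnorm_smul (q : ℚ) (x : I →₀ ℚ) : Fnorm (q • x) = |(q : ℝ)| * Fnorm x := by
  rw [Fnorm, normValueSet_smul, Real.sSup_smul_of_nonneg (abs_nonneg _), smul_eq_mul, Fnorm]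

theorem fnorm_zero : Fnorm (0 : I →₀ ℚ) = 0 := by
  simpa using fnorm_smul (0 : ℚ) (0 : I →₀ ℚ)

theorem fnorm_add_le (x y : I →₀ ℚ) : Fnorm (x + y) ≤ Fnorm x + Fnorm y := by
  refine csSup_le ⟨0, zero_mem_normValueSet _⟩ ?_
  rintro r ⟨n, t, ht, rfl⟩
  calc |seqFunctional t (x + y)| ≤ |seqFunctional t x| + |seqFunctional t y| := by
        rw [seqFunctional_add]; exact abs_add_le _ _
    _ ≤ Fnorm x + Fnorm y :=
        add_le_add (abs_seqFunctional_le_fnorm ht x) (abs_seqFunctional_le_fnorm ht y)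

theorem abs_apply_div_log_two_le_fnorm (x : I →₀ ℚ) (i : I) :
    |(x i : ℝ)| / Real.log 2 ≤ Fnorm x := by
  have h := abs_seqFunctional_le_fnorm (Subsingleton.strictMono fun _ : Fin 1 => i) x
  rwa [seqFunctional_const_fin_one, abs_div, abs_of_pos (Real.log_pos one_lt_two)] at h

theorem fnorm_eq_zero_iff {x : I →₀ ℚ} : Fnorm x = 0 ↔ x = 0 := by
  refine ⟨fun h => ?_, fun h => h ▸ fnorm_zero⟩
  ext i
  have hi := h ▸ abs_apply_div_log_two_le_fnorm x i
  have : |(x i : ℝ)| ≤ 0 := by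
    simpa using (div_le_iff₀ (Real.log_pos one_lt_two)).mp hi
  exact_mod_cast abs_nonpos_iff.mp this

end Fnorm

theorem Cardinal.mk_finsupp_rat_of_infinite (I : Type*) [Infinite I] :
    Cardinal.mk (I →₀ ℚ) = Cardinal.mk I := by
  rw [Cardinal.mk_finsupp_lift_of_infinite, Cardinal.mkRat]
  simp [Cardinal.aleph0_le_mk I]

/-- For an infinite linear order `I`, `‖·‖_F` is a norm on the ℚ-vector space `B_I`:
it is nonnegative and finite (the defining set of values is bounded above), vanishes
exactly at `0`, is absolutely homogeneous for rational scalars, and satisfies the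
triangle inequality.  Moreover `|B_I| = |I|`. -/
theorem Fnorm_is_norm {I : Type*} [LinearOrder I] [Infinite I] :
    (∀ x : I →₀ ℚ, 0 ≤ Fnorm x ∧ BddAbove (normValueSet x)) ∧
      (∀ x : I →₀ ℚ, Fnorm x = 0 ↔ x = 0) ∧
      (∀ (q : ℚ) (x : I →₀ ℚ), Fnorm (q • x) = |(q : ℝ)| * Fnorm x) ∧
      (∀ x y : I →₀ ℚ, Fnorm (x + y) ≤ Fnorm x + Fnorm y) ∧
      Cardinal.mk (I →₀ ℚ) = Cardinal.mk I :=
  ⟨fun x => ⟨fnorm_nonneg x, bddAbove_normValueSet x⟩, fun _ => fnorm_eq_zero_iff,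
    fnorm_smul, fnorm_add_le, Cardinal.mk_finsupp_rat_of_infinite I⟩
end

section
/- Let I be a linear order, m ≥ 1 an integer, and i_1 >_I i_2 >_I … >_I i_m elements of I (a strictly I-decreasing sequence). Then ‖∑_{l=1}^{m} (1/(l+1))·x_{i_l}‖_F < 4. -/
/-!
A functional `f_t` sees `x` only through the matches `t(k) = i_l`; as `t` increases and `i`
decreases, the matched pairs `(k, l)` form a strictly decreasing chain `P`, and `f_t(x)` is the sum
of `1 / ((l + 1) log (k + 2))` over `P`. Counting the pairs to the left and to the right of a pair
gives `k + l ≥ |P|`. So the pairs with `l ≤ |P| / 2` have `k ≥ |P| / 2`, and contribute at most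
`(∑_{1 ≤ l ≤ |P|/2} 1 / (l + 1)) / log (|P| / 2 + 1) ≤ 1`, while each of the at most `|P|` other
pairs has `l + 1 > |P| / 2 + 1` and contributes less than `2 / (|P| log 2)`.
Hence `‖x‖_F ≤ 1 + 2 / log 2 < 4`.
-/

open Finset Real

lemma sum_Icc_one_div_add_one_le_log (N : ℕ) :
    ∑ l ∈ Icc 1 N, (1 : ℝ) / (l + 1) ≤ log (N + 1) := by
  have h := harmonic_le_one_add_log (N + 1)
  rw [harmonic, sum_range_succ'] at h
  rw [← Ico_add_one_right_eq_Icc, sum_Ico_eq_sum_range, add_tsub_cancel_right]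
  push_cast at h ⊢
  simp only [one_div, add_comm 1 (_ : ℝ), inv_one] at h ⊢
  linarith

/-- By trichotomy the iff forces `p.1 = q.1 ↔ p.2 = q.2`, so `P` is the graph of an injective,
strictly decreasing partial map `ℕ → ℕ`. -/
def IsStrictAntiGraph (P : Finset (ℕ × ℕ)) : Prop :=
  ∀ p ∈ P, ∀ q ∈ P, p.1 < q.1 ↔ q.2 < p.2

/-- The contribution of a match `t(k) = i_l` to `f_t(x)`. -/
noncomputable def pairWeight (p : ℕ × ℕ) : ℝ :=
  1 / (p.2 + 1) / log (p.1 + 2)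

lemma pairWeight_nonneg (p : ℕ × ℕ) : 0 ≤ pairWeight p :=
  div_nonneg (by positivity) (log_nonneg (le_add_of_nonneg_of_le p.1.cast_nonneg one_le_two))

lemma sum_pairWeight_filter_lt_snd_le (P : Finset (ℕ × ℕ)) :
    ∑ p ∈ P with #P / 2 < p.2, pairWeight p ≤ 2 / log 2 := by
  set h := #P / 2
  have hlog2 : 0 < log 2 := log_pos one_lt_two
  have hterm : ∀ p ∈ {q ∈ P | h < q.2}, pairWeight p ≤ 1 / (h + 2) / log 2 := by
    intro p hp
    have hp2 : (h : ℝ) + 2 ≤ p.2 + 1 := by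
      exact_mod_cast Nat.add_le_add_right (mem_filter.mp hp).2 1
    have hlog : log 2 ≤ log (p.1 + 2) := log_le_log two_pos (by simp)
    unfold pairWeight
    gcongr
  have hcard : (#{p ∈ P | h < p.2} : ℝ) ≤ 2 * h + 1 := by
    exact_mod_cast (card_filter_le _ _).trans (by omega)
  calc ∑ p ∈ P with h < p.2, pairWeight p
      ≤ #{p ∈ P | h < p.2} • (1 / (h + 2) / log 2) := sum_le_card_nsmul _ _ _ hterm
    _ ≤ 2 / log 2 := by
      rw [nsmul_eq_mul, ← mul_div_assoc, mul_one_div]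
      gcongr
      rw [div_le_iff₀ (by positivity)]
      linarith

namespace IsStrictAntiGraph

variable {P : Finset (ℕ × ℕ)}

lemma injOn_fst (hP : IsStrictAntiGraph P) : Set.InjOn Prod.fst (P : Set (ℕ × ℕ)) := by
  intro p hp q hq h
  have := hP p hp q hq
  have := hP q hq p hp
  exact Prod.ext h (by grind)

lemma injOn_snd (hP : IsStrictAntiGraph P) : Set.InjOn Prod.snd (P : Set (ℕ × ℕ)) := by
  intro p hp q hq h
  have := hP p hp q hq
  have := hP q hq p hp
  exact Prod.ext (by grind) h

/-- The pairs left of `p` have distinct first coordinates below `p.1`, the others distinct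
second coordinates in `[1, p.2]`. -/
lemma card_le_fst_add_snd (hP : IsStrictAntiGraph P) (hpos : ∀ q ∈ P, 1 ≤ q.2) {p : ℕ × ℕ}
    (hp : p ∈ P) : #P ≤ p.1 + p.2 := by
  have hleft : #{q ∈ P | q.1 < p.1} ≤ p.1 := by
    simpa using card_le_card_of_injOn Prod.fst (t := range p.1)
      (fun q hq => by simpa using (mem_filter.mp hq).2)
      (hP.injOn_fst.mono (coe_subset.mpr (filter_subset _ _)))
  have hright : #{q ∈ P | ¬q.1 < p.1} ≤ p.2 := by
    simpa using card_le_card_of_injOn Prod.snd (t := Icc 1 p.2)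
      (fun q hq => by
        obtain ⟨hqP, hq⟩ := mem_filter.mp hq
        simpa [hpos q hqP] using (hP q hqP p hp).not.mp hq.not_gt)
      (hP.injOn_snd.mono (coe_subset.mpr (filter_subset _ _)))
  rw [← card_filter_add_card_filter_not (fun q => q.1 < p.1)]
  omega

lemma sum_pairWeight_filter_snd_le_le_one (hP : IsStrictAntiGraph P) (hpos : ∀ q ∈ P, 1 ≤ q.2) :
    ∑ p ∈ P with p.2 ≤ #P / 2, pairWeight p ≤ 1 := by
  set h := #P / 2
  rcases (P.filter (·.2 ≤ h)).eq_empty_or_nonempty with hempty | ⟨p₀, hp₀⟩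
  · simp [hempty]
  have hL : 0 < log (h + 1 : ℝ) := by
    have := hpos p₀ (mem_filter.mp hp₀).1
    have := (mem_filter.mp hp₀).2
    exact log_pos (by exact_mod_cast (by omega : 1 < h + 1))
  have hterm : ∀ p ∈ {q ∈ P | q.2 ≤ h}, pairWeight p ≤ 1 / (p.2 + 1) / log (h + 1) := by
    intro p hp
    obtain ⟨hpP, hph⟩ := mem_filter.mp hp
    have := hP.card_le_fst_add_snd hpos hpP
    have hfst : (h : ℝ) + 1 ≤ p.1 + 2 := by exact_mod_cast (by omega : h + 1 ≤ p.1 + 2)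
    unfold pairWeight
    gcongr
  have hsnd : ∑ p ∈ P with p.2 ≤ h, (1 : ℝ) / (p.2 + 1) ≤ log (h + 1) := by
    rw [← sum_image (g := Prod.snd) (f := fun l : ℕ => (1 : ℝ) / (l + 1))
      (hP.injOn_snd.mono (coe_subset.mpr (filter_subset _ _)))]
    refine (sum_le_sum_of_subset_of_nonneg ?_ fun _ _ _ => by positivity).trans
      (sum_Icc_one_div_add_one_le_log h)
    intro l hl
    obtain ⟨p, hp, rfl⟩ := mem_image.mp hl
    obtain ⟨hpP, hph⟩ := mem_filter.mp hp
    exact mem_Icc.mpr ⟨hpos p hpP, hph⟩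
  calc ∑ p ∈ P with p.2 ≤ h, pairWeight p
      ≤ ∑ p ∈ P with p.2 ≤ h, 1 / ((p.2 : ℝ) + 1) / log (h + 1) := sum_le_sum hterm
    _ = (∑ p ∈ P with p.2 ≤ h, 1 / ((p.2 : ℝ) + 1)) / log (h + 1) := (sum_div ..).symm
    _ ≤ 1 := (div_le_one hL).mpr hsnd

lemma sum_pairWeight_le (hP : IsStrictAntiGraph P) (hpos : ∀ q ∈ P, 1 ≤ q.2) :
    ∑ p ∈ P, pairWeight p ≤ 1 + 2 / log 2 := by
  rw [← sum_filter_add_sum_filter_not P (·.2 ≤ #P / 2)]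
  simp only [not_le]
  exact add_le_add (hP.sum_pairWeight_filter_snd_le_le_one hpos)
    (sum_pairWeight_filter_lt_snd_le P)

end IsStrictAntiGraph

section

variable {I : Type*} [LinearOrder I]

lemma seqFunctional_sum_single {ι : Type*} {n : ℕ} (t : Fin n → I) (s : Finset ι) (w : ι → I)
    (a : ι → ℚ) :
    seqFunctional t (∑ j ∈ s, Finsupp.single (w j) (a j)) =
      ∑ p ∈ (univ : Finset (Fin n)) ×ˢ s with t p.1 = w p.2,
        (a p.2 : ℝ) / log (((p.1 : ℕ) : ℝ) + 2) := by
  unfold seqFunctional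
  rw [sum_filter, sum_product]
  refine sum_congr rfl fun k _ => ?_
  simp only [Finsupp.finsetSum_apply, Finsupp.single_apply, Rat.cast_sum, sum_div]
  refine sum_congr rfl fun j _ => ?_
  split_ifs <;> simp_all

lemma abs_seqFunctional_le_s17 {m : ℕ} {v : ℕ → I} (hv : StrictAntiOn v (Set.Icc 1 m)) {n : ℕ}
    {t : Fin n → I} (ht : StrictMono t) :
    |seqFunctional t (∑ l ∈ Icc 1 m, Finsupp.single (v l) ((1 : ℚ) / ((l : ℚ) + 1)))|
      ≤ 1 + 2 / log 2 := by
  set Q := {p ∈ (univ : Finset (Fin n)) ×ˢ Icc 1 m | t p.1 = v p.2}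
  set P := Q.map (Fin.valEmbedding.prodMap (Function.Embedding.refl ℕ))
  have hval : seqFunctional t (∑ l ∈ Icc 1 m, Finsupp.single (v l) ((1 : ℚ) / ((l : ℚ) + 1)))
      = ∑ p ∈ P, pairWeight p := by
    rw [seqFunctional_sum_single, sum_map]
    push_cast
    rfl
  have hP : IsStrictAntiGraph P := by
    simp only [IsStrictAntiGraph, P, Q, forall_mem_map, mem_filter, mem_product, mem_univ,
      true_and, mem_Icc]
    rintro ⟨k, l⟩ ⟨hl, hkl⟩ ⟨k', l'⟩ ⟨hl', hkl'⟩
    simp only [Function.Embedding.coe_prodMap, Prod.map, Fin.valEmbedding_apply,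
      Function.Embedding.refl_apply, Fin.val_fin_lt]
    rw [← ht.lt_iff_lt, hkl, hkl', hv.lt_iff_gt hl hl']
  have hpos : ∀ p ∈ P, 1 ≤ p.2 := by
    simp only [P, Q, forall_mem_map, mem_filter, mem_product, mem_Icc]
    exact fun p hp => hp.1.2.1
  rw [hval, abs_of_nonneg (sum_nonneg fun p _ => pairWeight_nonneg p)]
  exact hP.sum_pairWeight_le hpos

end

lemma one_add_two_div_log_two_lt_four : 1 + 2 / log 2 < 4 := by
  have := log_two_gt_d9
  rw [← lt_sub_iff_add_lt', div_lt_iff₀ (by linarith)]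
  linarith

theorem Fnorm_decreasing_lt_four_general {I : Type*} [LinearOrder I] (m : ℕ)
    (v : ℕ → I) (hv : StrictAntiOn v (Set.Icc 1 m)) :
    Fnorm (∑ l ∈ Finset.Icc 1 m, Finsupp.single (v l) ((1 : ℚ) / ((l : ℚ) + 1))) < 4 := by
  refine (Real.sSup_le ?_ (by positivity)).trans_lt one_add_two_div_log_two_lt_four
  rintro _ ⟨n, t, ht, rfl⟩
  exact abs_seqFunctional_le_s17 hv ht

/-- If `i_1 >_I i_2 >_I ⋯ >_I i_m` (a strictly decreasing sequence), then
`‖∑_{l=1}^m (1/(l+1))·x_{i_l}‖_F < 4`. -/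
theorem Fnorm_decreasing_lt_four {I : Type*} [LinearOrder I] (m : ℕ) (hm : 1 ≤ m)
    (v : ℕ → I) (hv : StrictAntiOn v (Set.Icc 1 m)) :
    Fnorm (∑ l ∈ Finset.Icc 1 m, Finsupp.single (v l) ((1 : ℚ) / ((l : ℚ) + 1))) < 4 :=
  Fnorm_decreasing_lt_four_general m v hv
end

section
/- Let w₁ and w₂ be sets, let ≤₁ be a linear order on w₁ and ≤₂ a linear order on w₂, and suppose ≤₁ and ≤₂ agree on w₁ ∩ w₂ (for all x, y ∈ w₁ ∩ w₂, x ≤₁ y iff x ≤₂ y). Then there is a linear order ≤ on w₁ ∪ w₂ extending both: the restriction of ≤ to w₁ × w₁ is ≤₁ and the restriction of ≤ to w₂ × w₂ is ≤₂. -/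
/-- `r` is a linear order on the set `w`: reflexive, antisymmetric, transitive and
total on `w`. -/
def IsLinearOrderOn {α : Type*} (w : Set α) (r : α → α → Prop) : Prop :=
  (∀ x ∈ w, r x x) ∧
    (∀ x ∈ w, ∀ y ∈ w, r x y → r y x → x = y) ∧
    (∀ x ∈ w, ∀ y ∈ w, ∀ z ∈ w, r x y → r y z → r x z) ∧
    (∀ x ∈ w, ∀ y ∈ w, r x y ∨ r y x)

/-- Witness predicate: some element of the intersection lies between `b` (w.r.t. `r₂`)
and `a` (w.r.t. `r₁`). -/
def AmalgWit {α : Type*} (w₁ w₂ : Set α) (r₁ r₂ : α → α → Prop) (b a : α) : Prop :=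
  ∃ z, z ∈ w₁ ∧ z ∈ w₂ ∧ r₂ b z ∧ r₁ z a

/-- The amalgamated relation. -/
def Amalg {α : Type*} (w₁ w₂ : Set α) (r₁ r₂ : α → α → Prop) (x y : α) : Prop :=
  (x ∈ w₁ ∧ y ∈ w₁ ∧ r₁ x y) ∨
  (x ∈ w₂ ∧ y ∈ w₂ ∧ r₂ x y) ∨
  (x ∈ w₁ ∧ x ∉ w₂ ∧ y ∈ w₂ ∧ y ∉ w₁ ∧ ¬ AmalgWit w₁ w₂ r₁ r₂ y x) ∨
  (x ∈ w₂ ∧ x ∉ w₁ ∧ y ∈ w₁ ∧ y ∉ w₂ ∧ AmalgWit w₁ w₂ r₁ r₂ x y)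

/-- Two linear orders on `w₁` and `w₂` agreeing on `w₁ ∩ w₂` have a common extension
to a linear order on `w₁ ∪ w₂`. -/
theorem linearOrder_amalgamation {α : Type*} (w₁ w₂ : Set α)
    (r₁ r₂ : α → α → Prop)
    (h₁ : IsLinearOrderOn w₁ r₁) (h₂ : IsLinearOrderOn w₂ r₂)
    (hagree : ∀ x ∈ w₁ ∩ w₂, ∀ y ∈ w₁ ∩ w₂, (r₁ x y ↔ r₂ x y)) :
    ∃ r : α → α → Prop, IsLinearOrderOn (w₁ ∪ w₂) r ∧
      (∀ x ∈ w₁, ∀ y ∈ w₁, (r x y ↔ r₁ x y)) ∧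
      (∀ x ∈ w₂, ∀ y ∈ w₂, (r x y ↔ r₂ x y)) := by
  obtain ⟨refl₁, anti₁, trans₁, total₁⟩ := h₁
  obtain ⟨refl₂, anti₂, trans₂, total₂⟩ := h₂
  set D := AmalgWit w₁ w₂ r₁ r₂ with hD
  set r := Amalg w₁ w₂ r₁ r₂ with hr
  have hag : ∀ x, x ∈ w₁ → x ∈ w₂ → ∀ y, y ∈ w₁ → y ∈ w₂ → (r₁ x y ↔ r₂ x y) := by
    intro x hx1 hx2 y hy1 hy2
    exact hagree x ⟨hx1, hx2⟩ y ⟨hy1, hy2⟩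
  -- restriction lemmas
  have hw1 : ∀ x ∈ w₁, ∀ y ∈ w₁, (r x y ↔ r₁ x y) := by
    intro x hx y hy
    constructor
    · rintro (⟨_, _, h⟩ | ⟨hx2, hy2, h⟩ | ⟨_, _, _, hy1, _⟩ | ⟨_, hx1, _⟩)
      · exact h
      · exact (hag x hx hx2 y hy hy2).mpr h
      · exact absurd hy hy1
      · exact absurd hx hx1
    · intro h; exact Or.inl ⟨hx, hy, h⟩
  have hw2 : ∀ x ∈ w₂, ∀ y ∈ w₂, (r x y ↔ r₂ x y) := by
    intro x hx y hy
    constructor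
    · rintro (⟨hx1, hy1, h⟩ | ⟨_, _, h⟩ | ⟨_, hx2, _⟩ | ⟨_, _, _, hy2, _⟩)
      · exact (hag x hx1 hx y hy1 hy).mp h
      · exact h
      · exact absurd hx hx2
      · exact absurd hy hy2
    · intro h; exact Or.inr (Or.inl ⟨hx, hy, h⟩)
  -- cross-pair characterization: a ∈ w₁ \ w₂, b ∈ w₂ \ w₁
  have hAB : ∀ a, a ∈ w₁ → a ∉ w₂ → ∀ b, b ∈ w₂ → b ∉ w₁ →
      (r a b ↔ ¬ D b a) ∧ (r b a ↔ D b a) := by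
    intro a ha1 ha2 b hb2 hb1
    constructor
    · constructor
      · rintro (⟨_, hb1', _⟩ | ⟨ha2', _⟩ | ⟨_, _, _, _, h⟩ | ⟨_, ha1', _⟩)
        · exact absurd hb1' hb1
        · exact absurd ha2' ha2
        · exact h
        · exact absurd ha1 ha1'
      · intro h; exact Or.inr (Or.inr (Or.inl ⟨ha1, ha2, hb2, hb1, h⟩))
    · constructor
      · rintro (⟨hb1', _⟩ | ⟨_, ha2', _⟩ | ⟨_, hb2', _⟩ | ⟨_, _, _, _, h⟩)
        · exact absurd hb1' hb1
        · exact absurd ha2' ha2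
        · exact absurd hb2 hb2'
        · exact h
      · intro h; exact Or.inr (Or.inr (Or.inr ⟨hb2, hb1, ha1, ha2, h⟩))
  refine ⟨r, ⟨?_, ?_, ?_, ?_⟩, hw1, hw2⟩
  · -- reflexivity
    rintro x (hx | hx)
    · exact Or.inl ⟨hx, hx, refl₁ x hx⟩
    · exact Or.inr (Or.inl ⟨hx, hx, refl₂ x hx⟩)
  · -- antisymmetry
    intro x hx y hy hxy hyx
    by_cases hx1 : x ∈ w₁ <;> by_cases hy1 : y ∈ w₁
    · exact anti₁ x hx1 y hy1 ((hw1 x hx1 y hy1).mp hxy) ((hw1 y hy1 x hx1).mp hyx)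
    · have hy2 : y ∈ w₂ := hy.resolve_left hy1
      by_cases hx2 : x ∈ w₂
      · exact anti₂ x hx2 y hy2 ((hw2 x hx2 y hy2).mp hxy) ((hw2 y hy2 x hx2).mp hyx)
      · exact absurd (((hAB x hx1 hx2 y hy2 hy1).2).mp hyx)
          (((hAB x hx1 hx2 y hy2 hy1).1).mp hxy)
    · have hx2 : x ∈ w₂ := hx.resolve_left hx1
      by_cases hy2 : y ∈ w₂
      · exact anti₂ x hx2 y hy2 ((hw2 x hx2 y hy2).mp hxy) ((hw2 y hy2 x hx2).mp hyx)
      · exact absurd (((hAB y hy1 hy2 x hx2 hx1).2).mp hxy)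
          (((hAB y hy1 hy2 x hx2 hx1).1).mp hyx)
    · have hx2 : x ∈ w₂ := hx.resolve_left hx1
      have hy2 : y ∈ w₂ := hy.resolve_left hy1
      exact anti₂ x hx2 y hy2 ((hw2 x hx2 y hy2).mp hxy) ((hw2 y hy2 x hx2).mp hyx)
  · -- transitivity
    intro x hx y hy z hz hxy hyz
    by_cases hx1 : x ∈ w₁ <;> by_cases hz1 : z ∈ w₁
    · -- x, z ∈ w₁ : prove r₁ x z
      refine Or.inl ⟨hx1, hz1, ?_⟩
      by_cases hy1 : y ∈ w₁
      · exact trans₁ x hx1 y hy1 z hz1 ((hw1 x hx1 y hy1).mp hxy) ((hw1 y hy1 z hz1).mp hyz)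
      · have hy2 : y ∈ w₂ := hy.resolve_left hy1
        by_cases hx2 : x ∈ w₂
        · have hxy2 : r₂ x y := (hw2 x hx2 y hy2).mp hxy
          by_cases hz2 : z ∈ w₂
          · have hyz2 : r₂ y z := (hw2 y hy2 z hz2).mp hyz
            exact (hag x hx1 hx2 z hz1 hz2).mpr (trans₂ x hx2 y hy2 z hz2 hxy2 hyz2)
          · obtain ⟨u, hu1, hu2, hyu, huz⟩ := ((hAB z hz1 hz2 y hy2 hy1).2).mp hyz
            have hxu : r₂ x u := trans₂ x hx2 y hy2 u hu2 hxy2 hyu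
            exact trans₁ x hx1 u hu1 z hz1 ((hag x hx1 hx2 u hu1 hu2).mpr hxu) huz
        · have hnw : ¬ D y x := ((hAB x hx1 hx2 y hy2 hy1).1).mp hxy
          by_cases hz2 : z ∈ w₂
          · have hyz2 : r₂ y z := (hw2 y hy2 z hz2).mp hyz
            rcases total₁ x hx1 z hz1 with h | h
            · exact h
            · exact absurd ⟨z, hz1, hz2, hyz2, h⟩ hnw
          · obtain ⟨u, hu1, hu2, hyu, huz⟩ := ((hAB z hz1 hz2 y hy2 hy1).2).mp hyz
            rcases total₁ x hx1 z hz1 with h | h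
            · exact h
            · exact absurd ⟨u, hu1, hu2, hyu, trans₁ u hu1 z hz1 x hx1 huz h⟩ hnw
    · -- x ∈ w₁, z ∉ w₁ (so z ∈ w₂ \ w₁)
      have hz2 : z ∈ w₂ := hz.resolve_left hz1
      by_cases hx2 : x ∈ w₂
      · -- need r₂ x z
        refine Or.inr (Or.inl ⟨hx2, hz2, ?_⟩)
        by_cases hy2 : y ∈ w₂
        · exact trans₂ x hx2 y hy2 z hz2 ((hw2 x hx2 y hy2).mp hxy) ((hw2 y hy2 z hz2).mp hyz)
        · have hy1 : y ∈ w₁ := hy.resolve_right hy2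
          have hxy1 : r₁ x y := (hw1 x hx1 y hy1).mp hxy
          have hnw : ¬ D z y := ((hAB y hy1 hy2 z hz2 hz1).1).mp hyz
          rcases total₂ x hx2 z hz2 with h | h
          · exact h
          · exact absurd ⟨x, hx1, hx2, h, hxy1⟩ hnw
      · -- x ∈ w₁ \ w₂, z ∈ w₂ \ w₁ : need ¬ D z x
        refine ((hAB x hx1 hx2 z hz2 hz1).1).mpr ?_
        by_cases hy1 : y ∈ w₁
        · have hxy1 : r₁ x y := (hw1 x hx1 y hy1).mp hxy
          by_cases hy2 : y ∈ w₂
          · have hyz2 : r₂ y z := (hw2 y hy2 z hz2).mp hyz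
            rintro ⟨u, hu1, hu2, hzu, hux⟩
            have huy : r₁ u y := trans₁ u hu1 x hx1 y hy1 hux hxy1
            have hyu : r₁ y u := (hag y hy1 hy2 u hu1 hu2).mpr
              (trans₂ y hy2 z hz2 u hu2 hyz2 hzu)
            have : u = y := anti₁ u hu1 y hy1 huy hyu
            subst this
            have : z = u := anti₂ z hz2 u hu2 hzu hyz2
            exact hz1 (this ▸ hu1)
          · have hnw : ¬ D z y := ((hAB y hy1 hy2 z hz2 hz1).1).mp hyz
            rintro ⟨u, hu1, hu2, hzu, hux⟩
            exact hnw ⟨u, hu1, hu2, hzu, trans₁ u hu1 x hx1 y hy1 hux hxy1⟩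
        · have hy2 : y ∈ w₂ := hy.resolve_left hy1
          have hnw : ¬ D y x := ((hAB x hx1 hx2 y hy2 hy1).1).mp hxy
          have hyz2 : r₂ y z := (hw2 y hy2 z hz2).mp hyz
          rintro ⟨u, hu1, hu2, hzu, hux⟩
          exact hnw ⟨u, hu1, hu2, trans₂ y hy2 z hz2 u hu2 hyz2 hzu, hux⟩
    · -- x ∉ w₁ (so x ∈ w₂ \ w₁), z ∈ w₁
      have hx2 : x ∈ w₂ := hx.resolve_left hx1
      by_cases hz2 : z ∈ w₂
      · -- need r₂ x z
        refine Or.inr (Or.inl ⟨hx2, hz2, ?_⟩)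
        by_cases hy2 : y ∈ w₂
        · exact trans₂ x hx2 y hy2 z hz2 ((hw2 x hx2 y hy2).mp hxy) ((hw2 y hy2 z hz2).mp hyz)
        · have hy1 : y ∈ w₁ := hy.resolve_right hy2
          obtain ⟨u, hu1, hu2, hxu, huy⟩ := ((hAB y hy1 hy2 x hx2 hx1).2).mp hxy
          have hyz1 : r₁ y z := (hw1 y hy1 z hz1).mp hyz
          have huz : r₁ u z := trans₁ u hu1 y hy1 z hz1 huy hyz1
          exact trans₂ x hx2 u hu2 z hz2 hxu ((hag u hu1 hu2 z hz1 hz2).mp huz)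
      · -- x ∈ w₂ \ w₁, z ∈ w₁ \ w₂ : need D x z
        refine ((hAB z hz1 hz2 x hx2 hx1).2).mpr ?_
        by_cases hy2 : y ∈ w₂
        · have hxy2 : r₂ x y := (hw2 x hx2 y hy2).mp hxy
          by_cases hy1 : y ∈ w₁
          · exact ⟨y, hy1, hy2, hxy2, (hw1 y hy1 z hz1).mp hyz⟩
          · obtain ⟨u, hu1, hu2, hyu, huz⟩ := ((hAB z hz1 hz2 y hy2 hy1).2).mp hyz
            exact ⟨u, hu1, hu2, trans₂ x hx2 y hy2 u hu2 hxy2 hyu, huz⟩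
        · have hy1 : y ∈ w₁ := hy.resolve_right hy2
          obtain ⟨u, hu1, hu2, hxu, huy⟩ := ((hAB y hy1 hy2 x hx2 hx1).2).mp hxy
          have hyz1 : r₁ y z := (hw1 y hy1 z hz1).mp hyz
          exact ⟨u, hu1, hu2, hxu, trans₁ u hu1 y hy1 z hz1 huy hyz1⟩
    · -- x, z ∉ w₁ : both in w₂
      have hx2 : x ∈ w₂ := hx.resolve_left hx1
      have hz2 : z ∈ w₂ := hz.resolve_left hz1
      refine Or.inr (Or.inl ⟨hx2, hz2, ?_⟩)
      by_cases hy2 : y ∈ w₂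
      · exact trans₂ x hx2 y hy2 z hz2 ((hw2 x hx2 y hy2).mp hxy) ((hw2 y hy2 z hz2).mp hyz)
      · have hy1 : y ∈ w₁ := hy.resolve_right hy2
        obtain ⟨u, hu1, hu2, hxu, huy⟩ := ((hAB y hy1 hy2 x hx2 hx1).2).mp hxy
        have hnw : ¬ D z y := ((hAB y hy1 hy2 z hz2 hz1).1).mp hyz
        rcases total₂ x hx2 z hz2 with h | h
        · exact h
        · exact absurd ⟨u, hu1, hu2, trans₂ z hz2 x hx2 u hu2 h hxu, huy⟩ hnw
  · -- totality
    intro x hx y hy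
    by_cases hx1 : x ∈ w₁ <;> by_cases hy1 : y ∈ w₁
    · rcases total₁ x hx1 y hy1 with h | h
      · exact Or.inl ((hw1 x hx1 y hy1).mpr h)
      · exact Or.inr ((hw1 y hy1 x hx1).mpr h)
    · have hy2 : y ∈ w₂ := hy.resolve_left hy1
      by_cases hx2 : x ∈ w₂
      · rcases total₂ x hx2 y hy2 with h | h
        · exact Or.inl ((hw2 x hx2 y hy2).mpr h)
        · exact Or.inr ((hw2 y hy2 x hx2).mpr h)
      · by_cases hd : D y x
        · exact Or.inr (((hAB x hx1 hx2 y hy2 hy1).2).mpr hd)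
        · exact Or.inl (((hAB x hx1 hx2 y hy2 hy1).1).mpr hd)
    · have hx2 : x ∈ w₂ := hx.resolve_left hx1
      by_cases hy2 : y ∈ w₂
      · rcases total₂ x hx2 y hy2 with h | h
        · exact Or.inl ((hw2 x hx2 y hy2).mpr h)
        · exact Or.inr ((hw2 y hy2 x hx2).mpr h)
      · by_cases hd : D x y
        · exact Or.inl (((hAB y hy1 hy2 x hx2 hx1).2).mpr hd)
        · exact Or.inr (((hAB y hy1 hy2 x hx2 hx1).1).mpr hd)
    · have hx2 : x ∈ w₂ := hx.resolve_left hx1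
      have hy2 : y ∈ w₂ := hy.resolve_left hy1
      rcases total₂ x hx2 y hy2 with h | h
      · exact Or.inl ((hw2 x hx2 y hy2).mpr h)
      · exact Or.inr ((hw2 y hy2 x hx2).mpr h)
end
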